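/- arXiv:1210.0234 — 10 statements merged into one kernel-verified Lean document; each statement's English description precedes it below -/
import Mathlib

section
/- If P = [x_1,...,x_m] is a pointer list and i, j are distinct indices with |x_i| = |x_j|, then x_i and x_j have the same sign if and only if i and j have different parity. -/
/-!
Let `v = |x i| = |x j|`. As the extreme absolute values are attained only once, `v` is
intermediate, so `i` and `j` are the only positions of absolute value `v`. The positions of
absolute value `< v` are the minimum together with pairs of twins, so there is an odd number of
them. By (6), every pair of positions `{2t, 2t+1}` other than those of `i` and `j` lies wholly
below or wholly above `v`, so exactly one of the pair-mates of `i` and `j` lies below `v`. By (5),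
a pair is positive iff its first entry has the smaller absolute value, which turns this into the
sign of `x i` and `x j` in terms of the parities of `i` and `j`.
-/

/-- A finite sequence of integers (0-indexed list) is a *pointer list*:
(1) even positive length; (2) unique index of minimum absolute value;
(3) unique index of maximum absolute value; (4) each intermediate absolute
value occurs at exactly one other index; (5) for each even (0-based) index i,
x i ≤ x (i+1) and x i * x (i+1) > 0; (6) for each even (0-based) index i no
entry has absolute value strictly between |x i| and |x (i+1)|. -/
def IsPointerList (P : List ℤ) : Prop :=
  P.length % 2 = 0 ∧ 0 < P.length ∧
  (∃! i, i < P.length ∧ ∀ j < P.length, |P.getD i 0| ≤ |P.getD j 0|) ∧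
  (∃! i, i < P.length ∧ ∀ j < P.length, |P.getD j 0| ≤ |P.getD i 0|) ∧
  (∀ i < P.length, (∃ j < P.length, |P.getD j 0| < |P.getD i 0|) →
      (∃ j < P.length, |P.getD i 0| < |P.getD j 0|) →
      ∃! j, j < P.length ∧ j ≠ i ∧ |P.getD j 0| = |P.getD i 0|) ∧
  (∀ i, i % 2 = 0 → i + 1 < P.length →
      P.getD i 0 ≤ P.getD (i+1) 0 ∧ 0 < P.getD i 0 * P.getD (i+1) 0) ∧
  (∀ i, i % 2 = 0 → i + 1 < P.length →
      ¬ ∃ j < P.length,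
        (|P.getD i 0| < |P.getD j 0| ∧ |P.getD j 0| < |P.getD (i+1) 0|) ∨
        (|P.getD (i+1) 0| < |P.getD j 0| ∧ |P.getD j 0| < |P.getD i 0|))

-- Context directed excision: delete the first adjacent equal pair, if any.
open Classical in
noncomputable def cde (P : List ℤ) : List ℤ :=
  if h : ∃ i, i + 1 < P.length ∧ P.getD i 0 = P.getD (i+1) 0 then
    P.take (Nat.find h) ++ P.drop (Nat.find h + 2)
  else P

-- Context directed reversal: for the minimal i admitting j > i with
-- x i = -(x j) (and the minimal such j), reverse and negate the segment
-- from position i+1 through j.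
open Classical in
noncomputable def cdr (P : List ℤ) : List ℤ :=
  if h : ∃ i, ∃ j, i < j ∧ j < P.length ∧ P.getD i 0 = -(P.getD j 0) then
    let i := Nat.find h
    let j := Nat.find (Nat.find_spec h)
    P.take (i+1) ++ (((P.drop (i+1)).take (j - i)).reverse.map (fun z => -z)) ++
      P.drop (j+1)
  else P

-- Context directed block swap: for the lexicographically least (i, j)
-- admitting k, ℓ with i < j < k < ℓ, x i = x k, x j = x ℓ, interchange
-- the blocks x_{i+1}..x_{j-1} and x_k..x_ℓ.
open Classical in
noncomputable def cds (P : List ℤ) : List ℤ :=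
  if h : ∃ i, ∃ j, ∃ k, ∃ l, i < j ∧ j < k ∧ k < l ∧ l < P.length ∧
      P.getD i 0 = P.getD k 0 ∧ P.getD j 0 = P.getD l 0 then
    let i := Nat.find h
    let j := Nat.find (Nat.find_spec h)
    let k := Nat.find (Nat.find_spec (Nat.find_spec h))
    let l := Nat.find (Nat.find_spec (Nat.find_spec (Nat.find_spec h)))
    P.take (i+1) ++ ((P.drop k).take (l - k + 1)) ++ ((P.drop j).take (k - j)) ++
      ((P.drop (i+1)).take (j - i - 1)) ++ P.drop (l+1)
  else P

/-- The doubling map π: each entry z is replaced by (z, z+1) if z > 0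
and by (z-1, z) if z < 0. -/
def piMap (M : List ℤ) : List ℤ :=
  M.flatMap (fun z => if 0 < z then [z, z + 1] else [z - 1, z])

/-- One step of the HNS algorithm: apply cde if applicable, else cds if
applicable, else cdr. -/
noncomputable def hnsStep (P : List ℤ) : List ℤ :=
  if cde P ≠ P then cde P else if cds P ≠ P then cds P else cdr P

namespace Finset

variable {α β : Type*} [DecidableEq α]

theorem even_card_of_existsUnique_ne_eq [DecidableEq β] {s : Finset α} (f : α → β)
    (h : ∀ a ∈ s, ∃! b, b ∈ s ∧ b ≠ a ∧ f b = f a) : Even #s := by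
  rw [card_eq_sum_card_image f s]
  refine even_sum _ fun y hy => ?_
  obtain ⟨a, ha, rfl⟩ := mem_image.1 hy
  obtain ⟨b, ⟨hb, hba, hfb⟩, huniq⟩ := h a ha
  have hfiber : {c ∈ s | f c = f a} = {a, b} := by
    ext c
    simp only [mem_filter, mem_insert, mem_singleton]
    constructor
    · rintro ⟨hc, hfc⟩
      by_cases hca : c = a
      · exact .inl hca
      · exact .inr (huniq c ⟨hc, hca, hfc⟩)
    · rintro (rfl | rfl)
      exacts [⟨ha, rfl⟩, ⟨hb, hfb⟩]
  rw [hfiber, card_pair hba.symm]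
  exact even_two

theorem mem_iff_notMem_of_odd_card {s : Finset α} {a b : α} (hab : a ≠ b) (hs : Odd #s)
    (hsab : Even #(s \ {a, b})) : a ∈ s ↔ b ∉ s := by
  have hcard := card_sdiff_add_card_inter s {a, b}
  by_cases ha : a ∈ s <;> by_cases hb : b ∈ s
  · rw [inter_eq_right.2 (insert_subset ha (singleton_subset_iff.2 hb)), card_pair hab] at hcard
    rw [← hcard] at hs
    exact absurd (hsab.add even_two) (Nat.not_even_iff_odd.2 hs)
  · simp [ha, hb]
  · simp [ha, hb]
  · rw [disjoint_iff_inter_eq_empty.1 (by simp [ha, hb]), card_empty, add_zero] at hcard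
    rw [← hcard] at hs
    exact absurd hsab (Nat.not_even_iff_odd.2 hs)

end Finset

section OrderedRing

variable {R : Type*} [Ring R] [LinearOrder R] [IsStrictOrderedRing R]

theorem pos_iff_abs_lt_of_lt_of_mul_pos {a b : R} (hab : a < b) (h : 0 < a * b) :
    0 < a ↔ |a| < |b| := by
  rcases mul_pos_iff.1 h with ⟨ha, hb⟩ | ⟨ha, hb⟩
  · rw [abs_of_pos ha, abs_of_pos hb]
    exact iff_of_true ha hab
  · rw [abs_of_neg ha, abs_of_neg hb]
    exact iff_of_false ha.not_gt (neg_lt_neg hab).not_gt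

theorem mul_pos_iff_of_ne_zero {a b : R} (ha : a ≠ 0) (hb : b ≠ 0) :
    0 < a * b ↔ (0 < a ↔ 0 < b) := by
  rw [mul_pos_iff, ← not_le (b := a), ← not_le (b := b), ha.symm.le_iff_lt, hb.symm.le_iff_lt]
  tauto

end OrderedRing

theorem lt_of_existsUnique_min {α : Type*} [LinearOrder α] {m : ℕ} {f : ℕ → α}
    (h : ∃! i, i < m ∧ ∀ j < m, f i ≤ f j) {i₀ k : ℕ} (hi₀ : i₀ < m ∧ ∀ j < m, f i₀ ≤ f j)
    (hk : k < m) (hne : k ≠ i₀) : f i₀ < f k :=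
  (hi₀.2 k hk).lt_of_ne fun heq => hne (h.unique ⟨hk, fun j hj => heq ▸ hi₀.2 j hj⟩ hi₀)

theorem exists_lt_of_existsUnique_min {α : Type*} [LinearOrder α] {m : ℕ} {f : ℕ → α}
    (h : ∃! i, i < m ∧ ∀ j < m, f i ≤ f j) {i j : ℕ} (hi : i < m) (hj : j < m) (hij : i ≠ j)
    (heq : f i = f j) : ∃ k < m, f k < f i := by
  obtain ⟨i₀, hi₀⟩ := h.exists
  refine ⟨i₀, hi₀.1, ?_⟩
  by_cases hii₀ : i = i₀
  · exact heq ▸ lt_of_existsUnique_min h hi₀ hj (hii₀ ▸ hij.symm)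
  · exact lt_of_existsUnique_min h hi₀ hi hii₀

def pairMate (k : ℕ) : ℕ := if k % 2 = 0 then k + 1 else k - 1

theorem pairMate_ne (k : ℕ) : pairMate k ≠ k := by
  unfold pairMate; split <;> omega

theorem pairMate_involutive : Function.Involutive pairMate := fun k => by
  unfold pairMate; split <;> split <;> omega

theorem pairMate_div_two (k : ℕ) : pairMate k / 2 = k / 2 := by
  unfold pairMate; split <;> omega

theorem eq_pairMate_of_div_two_eq {k l : ℕ} (hne : l ≠ k) (h : l / 2 = k / 2) :
    l = pairMate k := by
  unfold pairMate; split <;> omega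

theorem pairMate_lt {k m : ℕ} (hm : m % 2 = 0) (hk : k < m) : pairMate k < m := by
  unfold pairMate; split <;> omega

theorem exists_pair_of_lt {k m : ℕ} (hm : m % 2 = 0) (hk : k < m) :
    ∃ p, p % 2 = 0 ∧ p + 1 < m ∧
      (p = k ∧ pairMate k = p + 1 ∨ p + 1 = k ∧ pairMate k = p) := by
  unfold pairMate; split
  · exact ⟨k, by omega⟩
  · exact ⟨k - 1, by omega⟩

structure IsPointerSeq (m : ℕ) (x : ℕ → ℤ) : Prop where
  length_mod_two : m % 2 = 0
  existsUnique_min : ∃! i, i < m ∧ ∀ j < m, |x i| ≤ |x j|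
  existsUnique_max : ∃! i, i < m ∧ ∀ j < m, |x j| ≤ |x i|
  existsUnique_twin : ∀ i < m, (∃ j < m, |x j| < |x i|) → (∃ j < m, |x i| < |x j|) →
    ∃! j, j < m ∧ j ≠ i ∧ |x j| = |x i|
  pair_le_and_mul_pos : ∀ i, i % 2 = 0 → i + 1 < m → x i ≤ x (i + 1) ∧ 0 < x i * x (i + 1)
  pair_not_abs_between : ∀ i, i % 2 = 0 → i + 1 < m →
    ¬ ∃ j < m, (|x i| < |x j| ∧ |x j| < |x (i + 1)|) ∨ (|x (i + 1)| < |x j| ∧ |x j| < |x i|)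

theorem IsPointerList.isPointerSeq {P : List ℤ} (hP : IsPointerList P) :
    IsPointerSeq P.length (P.getD · 0) :=
  let ⟨hm, _, hmin, hmax, htwin, hpair, hbetween⟩ := hP
  ⟨hm, hmin, hmax, htwin, hpair, hbetween⟩

open Finset

namespace IsPointerSeq

variable {m : ℕ} {x : ℕ → ℤ} (hx : IsPointerSeq m x)
include hx

theorem mul_pairMate_pos {k : ℕ} (hk : k < m) : 0 < x k * x (pairMate k) := by
  obtain ⟨p, hp, hpm, ⟨rfl, hmate⟩ | ⟨rfl, hmate⟩⟩ := exists_pair_of_lt hx.length_mod_two hk <;>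
    rw [hmate]
  · exact (hx.pair_le_and_mul_pos p hp hpm).2
  · exact mul_comm (x p) _ ▸ (hx.pair_le_and_mul_pos p hp hpm).2

theorem ne_zero {k : ℕ} (hk : k < m) : x k ≠ 0 :=
  left_ne_zero_of_mul (hx.mul_pairMate_pos hk).ne'

theorem pos_iff_of_abs_ne_pairMate {k : ℕ} (hk : k < m) (hne : |x k| ≠ |x (pairMate k)|) :
    0 < x k ↔ (k % 2 = 0 ↔ |x k| < |x (pairMate k)|) := by
  obtain ⟨p, hp, hpm, ⟨rfl, hmate⟩ | ⟨rfl, hmate⟩⟩ := exists_pair_of_lt hx.length_mod_two hk <;>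
    rw [hmate] at hne ⊢ <;> obtain ⟨hle, hmul⟩ := hx.pair_le_and_mul_pos p hp hpm
  · simpa [hp] using
      pos_iff_abs_lt_of_lt_of_mul_pos (hle.lt_of_ne fun h => hne (by rw [h])) hmul
  · rw [← pos_iff_pos_of_mul_pos hmul,
      pos_iff_abs_lt_of_lt_of_mul_pos (hle.lt_of_ne fun h => hne (by rw [h])) hmul]
    have hodd : ¬ (p + 1) % 2 = 0 := by omega
    simp only [hodd, false_iff, not_lt]
    exact ⟨fun h => h.le, fun h => h.lt_of_ne hne.symm⟩

theorem abs_pairMate_le_of_abs_lt {i k : ℕ} (hi : i < m) (hk : k < m) (h : |x k| < |x i|) :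
    |x (pairMate k)| ≤ |x i| := by
  by_contra! hgt
  obtain ⟨p, hp, hpm, ⟨rfl, hmate⟩ | ⟨rfl, hmate⟩⟩ := exists_pair_of_lt hx.length_mod_two hk <;>
    rw [hmate] at hgt
  · exact hx.pair_not_abs_between p hp hpm ⟨i, hi, .inl ⟨h, hgt⟩⟩
  · exact hx.pair_not_abs_between p hp hpm ⟨i, hi, .inr ⟨h, hgt⟩⟩

theorem exists_abs_lt_of_abs_eq {i j : ℕ} (hi : i < m) (hj : j < m) (hij : i ≠ j)
    (habs : |x i| = |x j|) : ∃ k < m, |x k| < |x i| :=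
  exists_lt_of_existsUnique_min hx.existsUnique_min hi hj hij habs

theorem exists_abs_gt_of_abs_eq {i j : ℕ} (hi : i < m) (hj : j < m) (hij : i ≠ j)
    (habs : |x i| = |x j|) : ∃ k < m, |x i| < |x k| :=
  exists_lt_of_existsUnique_min (α := ℤᵒᵈ) hx.existsUnique_max hi hj hij habs

theorem eq_or_eq_of_abs_eq {i j k : ℕ} (hi : i < m) (hj : j < m) (hij : i ≠ j)
    (habs : |x i| = |x j|) (hk : k < m) (hki : |x k| = |x i|) : k = i ∨ k = j := by
  obtain ⟨l, -, hl⟩ := hx.existsUnique_twin i hi (hx.exists_abs_lt_of_abs_eq hi hj hij habs)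
    (hx.exists_abs_gt_of_abs_eq hi hj hij habs)
  by_cases hk' : k = i
  · exact .inl hk'
  · exact .inr ((hl k ⟨hk, hk', hki⟩).trans (hl j ⟨hj, hij.symm, habs.symm⟩).symm)

theorem odd_card_abs_lt {i : ℕ} (hi : i < m) (hlow : ∃ k < m, |x k| < |x i|) :
    Odd #{k ∈ range m | |x k| < |x i|} := by
  obtain ⟨i₀, hi₀⟩ := hx.existsUnique_min.exists
  have hi₀S : i₀ ∈ {k ∈ range m | |x k| < |x i|} := by
    obtain ⟨k, hk, hki⟩ := hlow
    exact mem_filter.2 ⟨mem_range.2 hi₀.1, (hi₀.2 k hk).trans_lt hki⟩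
  rw [← card_erase_add_one hi₀S]
  refine (even_card_of_existsUnique_ne_eq (|x ·|) fun k hk => ?_).add_one
  simp only [mem_erase, mem_filter, mem_range] at hk
  obtain ⟨hki₀, hkm, hki⟩ := hk
  have hk₀ : |x i₀| < |x k| := lt_of_existsUnique_min hx.existsUnique_min hi₀ hkm hki₀
  obtain ⟨l, ⟨hlm, hlk, hl⟩, huniq⟩ := hx.existsUnique_twin k hkm ⟨i₀, hi₀.1, hk₀⟩ ⟨i, hi, hki⟩
  refine ⟨l, ⟨?_, hlk, hl⟩, fun l' hl' => huniq l' ⟨?_, hl'.2⟩⟩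
  · simp only [mem_erase, mem_filter, mem_range]
    exact ⟨by rintro rfl; exact hk₀.ne hl, hlm, hl ▸ hki⟩
  · simp only [mem_erase, mem_filter, mem_range] at hl'
    exact hl'.1.2.1

theorem abs_pairMate_lt_iff_not_abs_pairMate_lt {i j : ℕ} (hi : i < m) (hj : j < m)
    (hij : i ≠ j) (habs : |x i| = |x j|) :
    |x (pairMate i)| < |x i| ↔ ¬ |x (pairMate j)| < |x i| := by
  set S := {k ∈ range m | |x k| < |x i|}
  have hmem : ∀ k, k ∈ S ↔ k < m ∧ |x k| < |x i| := by simp [S]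
  have heven : Even #(S \ {pairMate i, pairMate j}) := by
    refine even_card_of_existsUnique_ne_eq (· / 2) fun k hk => ?_
    simp only [mem_sdiff, mem_insert, mem_singleton, hmem, not_or] at hk
    obtain ⟨⟨hkm, hki⟩, hki', hkj'⟩ := hk
    refine ⟨pairMate k, ⟨?_, pairMate_ne k, pairMate_div_two k⟩,
      fun l hl => eq_pairMate_of_div_two_eq hl.2.1 hl.2.2⟩
    have htwin : |x (pairMate k)| ≠ |x i| := fun h => by
      rcases hx.eq_or_eq_of_abs_eq hi hj hij habs (pairMate_lt hx.length_mod_two hkm) h with h | h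
      · exact hki' (pairMate_involutive.eq_iff.1 h)
      · exact hkj' (pairMate_involutive.eq_iff.1 h)
    simp only [mem_sdiff, mem_insert, mem_singleton, hmem, not_or,
      pairMate_involutive.injective.eq_iff]
    refine ⟨⟨pairMate_lt hx.length_mod_two hkm,
      (hx.abs_pairMate_le_of_abs_lt hi hkm hki).lt_of_ne htwin⟩, ?_, ?_⟩
    · rintro rfl; exact hki.ne rfl
    · rintro rfl; exact hki.ne habs.symm
  have hmates : pairMate i ≠ pairMate j := pairMate_involutive.injective.ne hij
  have := mem_iff_notMem_of_odd_card hmates (hx.odd_card_abs_lt hi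
    (hx.exists_abs_lt_of_abs_eq hi hj hij habs)) heven
  simpa only [mem_filter, mem_range, pairMate_lt hx.length_mod_two hi,
    pairMate_lt hx.length_mod_two hj, true_and] using this

theorem mul_pos_iff_mod_two_ne {i j : ℕ} (hi : i < m) (hj : j < m) (hij : i ≠ j)
    (habs : |x i| = |x j|) : 0 < x i * x j ↔ i % 2 ≠ j % 2 := by
  by_cases hpair : i / 2 = j / 2
  · refine iff_of_true ?_ (by omega)
    rw [eq_pairMate_of_div_two_eq hij.symm hpair.symm]
    exact hx.mul_pairMate_pos hi
  have hmate_ne {k : ℕ} (hk : k = i ∨ k = j) : |x (pairMate k)| ≠ |x i| := fun h => by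
    have hkm : k < m := by rcases hk with rfl | rfl <;> assumption
    have := pairMate_div_two k
    have := pairMate_ne k
    rcases hx.eq_or_eq_of_abs_eq hi hj hij habs (pairMate_lt hx.length_mod_two hkm) h with h | h <;>
      omega
  have hi' := hmate_ne (.inl rfl)
  have hj' := habs ▸ hmate_ne (.inr rfl)
  rw [mul_pos_iff_of_ne_zero (hx.ne_zero hi) (hx.ne_zero hj),
    hx.pos_iff_of_abs_ne_pairMate hi hi'.symm, hx.pos_iff_of_abs_ne_pairMate hj hj'.symm,
    ← hi'.symm.le_iff_lt, ← hj'.symm.le_iff_lt, ← not_lt, ← not_lt, ← habs,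
    hx.abs_pairMate_lt_iff_not_abs_pairMate_lt hi hj hij habs]
  rcases Nat.mod_two_eq_zero_or_one i with hi2 | hi2 <;>
    rcases Nat.mod_two_eq_zero_or_one j with hj2 | hj2 <;> simp only [hi2, hj2] <;> tauto

end IsPointerSeq

/-- entries with equal absolute value have the same sign iff
their indices have different parity. -/
theorem stmt0 (P : List ℤ) (hP : IsPointerList P) (i j : ℕ)
    (hi : i < P.length) (hj : j < P.length) (hij : i ≠ j)
    (habs : |P.getD i 0| = |P.getD j 0|) :
    0 < P.getD i 0 * P.getD j 0 ↔ i % 2 ≠ j % 2 :=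
  hP.isPointerSeq.mul_pos_iff_mod_two_ne hi hj hij habs
end

section
/- If P = [x_1,...,x_m] is a pointer list and i, j are distinct indices of the same parity, then x_i ≠ x_j. -/
theorem Finset.even_card_of_involution {ι : Type*} {s : Finset ι} (g : ∀ a ∈ s, ι)
    (hg_ne : ∀ a ha, g a ha ≠ a) (g_mem : ∀ a ha, g a ha ∈ s)
    (hg : ∀ a ha, g (g a ha) (g_mem a ha) = a) : Even s.card := by
  rw [← ZMod.natCast_eq_zero_iff_even, card_eq_sum_ones, Nat.cast_sum, Nat.cast_one]
  exact sum_involution g (fun _ _ => by decide) (fun a ha _ => hg_ne a ha) g_mem hg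

namespace PointerList

open Finset OrderDual

/-- The other position of the block `{2n, 2n + 1}` containing `k`. -/
def mate (k : ℕ) : ℕ := if k % 2 = 0 then k + 1 else k - 1

theorem mate_mate (k : ℕ) : mate (mate k) = k := by
  unfold mate; split_ifs <;> omega

theorem mate_ne (k : ℕ) : mate k ≠ k := by
  unfold mate; split_ifs <;> omega

theorem mate_mod_two_ne (k : ℕ) : mate k % 2 ≠ k % 2 := by
  unfold mate; split_ifs <;> omega

theorem mate_lt {m k : ℕ} (hm : Even m) (hk : k < m) : mate k < m := by
  rw [Nat.even_iff] at hm; unfold mate; split_ifs <;> omega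

theorem even_card_filter_of_mate {m : ℕ} (hm : Even m) (p : ℕ → Prop) [DecidablePred p]
    (hp : ∀ k < m, p k → p (mate k)) : Even ((range m).filter p).card := by
  refine even_card_of_involution (fun k _ => mate k) (fun k _ => mate_ne k) (fun k hk => ?_)
    (fun k _ => mate_mate k)
  rw [mem_filter, mem_range] at hk ⊢
  exact ⟨mate_lt hm hk.1, hp k hk.1 hk.2⟩

variable {α : Type*} [LinearOrder α]

theorem odd_card_filter_lt {m : ℕ} {f : ℕ → α} (hmax : ∃! i, i < m ∧ ∀ j < m, f j ≤ f i)
    (htwin : ∀ i < m, (∃ j < m, f j < f i) → (∃ j < m, f i < f j) →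
      ∃! j, j < m ∧ j ≠ i ∧ f j = f i)
    {w : α} (hlow : ∃ q < m, f q ≤ w) (hhigh : ∃ k < m, w < f k) :
    Odd ((range m).filter (fun k => w < f k)).card := by
  obtain ⟨M, ⟨hM, hMmax⟩, hMuniq⟩ := hmax
  obtain ⟨q, hq, hqw⟩ := hlow
  obtain ⟨t, ht, hwt⟩ := hhigh
  set T := (range m).filter (fun k => w < f k)
  have hmemT : ∀ k, k ∈ T ↔ k < m ∧ w < f k := fun k => by simp [T]
  have hMT : M ∈ T := (hmemT M).2 ⟨hM, hwt.trans_le (hMmax t ht)⟩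
  have hlt_max : ∀ k < m, k ≠ M → f k < f M := fun k hk hkM =>
    (hMmax k hk).lt_of_ne fun h => hkM (hMuniq k ⟨hk, fun j hj => h ▸ hMmax j hj⟩)
  have htwin' : ∀ k ∈ T.erase M, ∃! j, j < m ∧ j ≠ k ∧ f j = f k := by
    intro k hk
    obtain ⟨hkM, hkT⟩ := mem_erase.1 hk
    obtain ⟨hk, hwk⟩ := (hmemT k).1 hkT
    exact htwin k hk ⟨q, hq, hqw.trans_lt hwk⟩ ⟨M, hM, hlt_max k hk hkM⟩
  have htwin_mem : ∀ k hk, (htwin' k hk).choose ∈ T.erase M := by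
    intro k hk
    obtain ⟨htk, -, hftk⟩ := (htwin' k hk).choose_spec.1
    obtain ⟨hkM, hkT⟩ := mem_erase.1 hk
    obtain ⟨hk, hwk⟩ := (hmemT k).1 hkT
    refine mem_erase.2 ⟨fun h => (hlt_max k hk hkM).ne ?_, (hmemT _).2 ⟨htk, by rwa [hftk]⟩⟩
    rw [← hftk, h]
  have heven : Even (T.erase M).card := by
    refine even_card_of_involution (fun k hk => (htwin' k hk).choose)
      (fun k hk => (htwin' k hk).choose_spec.1.2.1) htwin_mem (fun k hk => ?_)
    obtain ⟨htk, hne, hftk⟩ := (htwin' k hk).choose_spec.1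
    exact ((htwin' _ (htwin_mem k hk)).choose_spec.2 k
      ⟨((hmemT k).1 (mem_of_mem_erase hk)).1, hne.symm, hftk.symm⟩).symm
  rw [← card_erase_add_one hMT]
  exact heven.add_one

/-- Conditions (1)–(4) and (6) of a pointer list, read on the levels `f k = |x k|`. -/
structure PointerLevels (m : ℕ) (f : ℕ → α) : Prop where
  even : Even m
  existsUnique_max : ∃! i, i < m ∧ ∀ j < m, f j ≤ f i
  existsUnique_min : ∃! i, i < m ∧ ∀ j < m, f i ≤ f j
  existsUnique_twin : ∀ i < m, (∃ j < m, f j < f i) → (∃ j < m, f i < f j) →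
    ∃! j, j < m ∧ j ≠ i ∧ f j = f i
  not_between : ∀ i < m, ∀ j < m, ¬ (f i < f j ∧ f j < f (mate i))

namespace PointerLevels

variable {m : ℕ} {f : ℕ → α} {a b : ℕ}

theorem dual (h : PointerLevels m f) : PointerLevels m (fun k => toDual (f k)) where
  even := h.even
  existsUnique_max := h.existsUnique_min
  existsUnique_min := h.existsUnique_max
  existsUnique_twin i hi hlo hhi := h.existsUnique_twin i hi hhi hlo
  not_between i hi j hj hij := h.not_between (mate i) (mate_lt h.even hi) j hj
    ⟨hij.2, by rw [mate_mate]; exact hij.1⟩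

theorem exists_gt (h : PointerLevels m f) (ha : a < m) (hb : b < m) (hne : a ≠ b)
    (hab : f a = f b) : ∃ k < m, f a < f k := by
  by_contra! htop
  exact hne (h.existsUnique_max.unique ⟨ha, htop⟩ ⟨hb, hab ▸ htop⟩)

theorem exists_lt (h : PointerLevels m f) (ha : a < m) (hb : b < m) (hne : a ≠ b)
    (hab : f a = f b) : ∃ k < m, f k < f a :=
  h.dual.exists_gt ha hb hne hab

theorem eq_or_eq_of_eq (h : PointerLevels m f) (ha : a < m) (hb : b < m) (hne : a ≠ b)
    (hab : f a = f b) : ∀ k < m, f k = f a → k = a ∨ k = b := by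
  intro k hk hka
  obtain ⟨c, -, hc⟩ :=
    h.existsUnique_twin a ha (h.exists_lt ha hb hne hab) (h.exists_gt ha hb hne hab)
  by_cases hk' : k = a
  · exact .inl hk'
  · exact .inr ((hc k ⟨hk, hk', hka⟩).trans (hc b ⟨hb, hne.symm, hab.symm⟩).symm)

theorem eq_of_mate_lt (h : PointerLevels m f) (ha : a < m) (hb : b < m) (hab : f a = f b)
    (ha' : f (mate a) < f a) (hb' : f (mate b) < f b) : a = b := by
  by_contra hne
  have hocc := h.eq_or_eq_of_eq ha hb hne hab
  have hclosed : ∀ k < m, f a < f k → f a < f (mate k) := by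
    intro k hk hak
    rcases lt_trichotomy (f (mate k)) (f a) with hlt | heq | hgt
    · exact (h.not_between (mate k) (mate_lt h.even hk) a ha
        ⟨hlt, by rwa [mate_mate]⟩).elim
    · rcases hocc _ (mate_lt h.even hk) heq with hka | hkb
      · subst hka
        rw [mate_mate] at ha'
        exact (lt_asymm hak ha').elim
      · subst hkb
        rw [mate_mate] at hb'
        exact ((hak.trans hb').ne hab).elim
    · exact hgt
  have heven := even_card_filter_of_mate h.even (fun k => f a < f k) hclosed
  have hodd := odd_card_filter_lt h.existsUnique_max h.existsUnique_twin
    ⟨mate a, mate_lt h.even ha, ha'.le⟩ (h.exists_gt ha hb hne hab)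
  exact Nat.not_even_iff_odd.2 hodd heven

theorem eq_of_le_mate (h : PointerLevels m f) (ha : a < m) (hb : b < m)
    (hpar : a % 2 = b % 2) (hab : f a = f b) (ha' : f a ≤ f (mate a))
    (hb' : f b ≤ f (mate b)) : a = b := by
  by_contra hne
  have hocc := h.eq_or_eq_of_eq ha hb hne hab
  have hlt : ∀ c < m, c % 2 = a % 2 → f c = f a → f c ≤ f (mate c) → f a < f (mate c) := by
    intro c hc hca hfc hle
    refine (hfc ▸ hle).lt_of_ne fun heq => ?_
    have := mate_mod_two_ne c
    rcases hocc _ (mate_lt h.even hc) heq.symm with h' | h' <;> omega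
  have ha'' := hlt a ha rfl rfl ha'
  have hb'' := hlt b hb hpar.symm hab.symm hb'
  have hmates : f (mate a) = f (mate b) := le_antisymm
    (not_lt.1 fun hlt' => h.not_between a ha (mate b) (mate_lt h.even hb) ⟨hb'', hlt'⟩)
    (not_lt.1 fun hlt' => h.not_between b hb (mate a) (mate_lt h.even ha) ⟨hab ▸ ha'', hlt'⟩)
  refine hne ?_
  rw [← mate_mate a, ← mate_mate b]
  refine congrArg mate (h.eq_of_mate_lt (mate_lt h.even ha) (mate_lt h.even hb) hmates ?_ ?_)
  · rwa [mate_mate]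
  · rwa [mate_mate, ← hmates, ← hab]

theorem eq_of_mate_le (h : PointerLevels m f) (ha : a < m) (hb : b < m)
    (hpar : a % 2 = b % 2) (hab : f a = f b) (ha' : f (mate a) ≤ f a)
    (hb' : f (mate b) ≤ f b) : a = b :=
  h.dual.eq_of_le_mate ha hb hpar hab ha' hb'

end PointerLevels

end PointerList

namespace IsPointerList

open PointerList

variable {P : List ℤ} {k : ℕ}

theorem pointerLevels (hP : IsPointerList P) :
    PointerLevels P.length (fun k => |P.getD k 0|) := by
  obtain ⟨hm, -, hmin, hmax, htwin, -, hgap⟩ := hP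
  refine ⟨Nat.even_iff.2 hm, hmax, hmin, htwin, fun i hi j hj hij => ?_⟩
  unfold mate at hij
  split_ifs at hij with hi2
  · exact hgap i hi2 (by omega) ⟨j, hj, .inl hij⟩
  · refine hgap (i - 1) (by omega) (by omega) ⟨j, hj, .inr ?_⟩
    rwa [Nat.sub_add_cancel (by omega)]

theorem pos_mate_iff (hP : IsPointerList P) (hk : k < P.length) :
    0 < P.getD (mate k) 0 ↔ 0 < P.getD k 0 := by
  obtain ⟨hm, -, -, -, -, hblock, -⟩ := hP
  refine (pos_iff_pos_of_mul_pos (b := P.getD (mate k) 0) ?_).symm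
  unfold mate
  split_ifs with hk2
  · exact (hblock k hk2 (by omega)).2
  · have := (hblock (k - 1) (by omega) (by omega)).2
    rwa [Nat.sub_add_cancel (by omega), mul_comm] at this

theorem abs_le_abs_mate (hP : IsPointerList P) (hk : k < P.length)
    (hs : k % 2 = 0 ↔ 0 < P.getD k 0) : |P.getD k 0| ≤ |P.getD (mate k) 0| := by
  obtain ⟨hm, -, -, -, -, hblock, -⟩ := hP
  unfold mate
  split_ifs with hk2
  · have hle := (hblock k hk2 (by omega)).1
    have hpos := hs.1 hk2
    rw [abs_of_pos hpos, abs_of_pos (hpos.trans_le hle)]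
    exact hle
  · have hle := (hblock (k - 1) (by omega) (by omega)).1
    rw [Nat.sub_add_cancel (by omega)] at hle
    have hnonpos : P.getD k 0 ≤ 0 := not_lt.1 (mt hs.2 hk2)
    rw [abs_of_nonpos hnonpos, abs_of_nonpos (hle.trans hnonpos)]
    exact neg_le_neg hle

theorem abs_mate_le_abs (hP : IsPointerList P) (hk : k < P.length)
    (hs : ¬(k % 2 = 0 ↔ 0 < P.getD k 0)) : |P.getD (mate k) 0| ≤ |P.getD k 0| := by
  have hk' := mate_lt (Nat.even_iff.2 hP.1) hk
  have hs' : mate k % 2 = 0 ↔ 0 < P.getD (mate k) 0 := by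
    have := mate_mod_two_ne k
    rw [hP.pos_mate_iff hk]
    omega
  simpa only [mate_mate] using hP.abs_le_abs_mate hk' hs'

end IsPointerList

/-- distinct indices of the same parity carry distinct entries. -/
theorem stmt1 (P : List ℤ) (hP : IsPointerList P) (i j : ℕ)
    (hi : i < P.length) (hj : j < P.length) (hij : i ≠ j)
    (hpar : i % 2 = j % 2) :
    P.getD i 0 ≠ P.getD j 0 := by
  intro hx
  have hL := hP.pointerLevels
  have habs : |P.getD i 0| = |P.getD j 0| := by rw [hx]
  by_cases hs : i % 2 = 0 ↔ 0 < P.getD i 0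
  · have hs' : j % 2 = 0 ↔ 0 < P.getD j 0 := by rwa [← hpar, ← hx]
    exact hij (hL.eq_of_le_mate hi hj hpar habs (hP.abs_le_abs_mate hi hs)
      (hP.abs_le_abs_mate hj hs'))
  · have hs' : ¬(j % 2 = 0 ↔ 0 < P.getD j 0) := by rwa [← hpar, ← hx]
    exact hij (hL.eq_of_mate_le hi hj hpar habs (hP.abs_mate_le_abs hi hs)
      (hP.abs_mate_le_abs hj hs'))
end

section
/- There is no pointer list of the form [B, C, ..., C, B], i.e., no pointer list whose first entry equals its last entry and whose second entry equals its second-to-last entry (with length at least 4). -/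
/-! Condition (5) on the first pair [B, C] gives B ≤ C and on the last pair [C, B] gives C ≤ B,
so B = C and |B| occurs at the three distinct positions 0, 1 and m - 2. But by (2)–(4) the
extreme absolute values occur once and every other one exactly twice. -/

namespace IsPointerList

variable {P : List ℤ}

theorem false_of_abs_eq_three {i j k : ℕ} (hP : IsPointerList P) (hi : i < P.length)
    (hj : j < P.length) (hk : k < P.length) (hij : i ≠ j) (hik : i ≠ k) (hjk : j ≠ k)
    (hji : |P.getD j 0| = |P.getD i 0|) (hki : |P.getD k 0| = |P.getD i 0|) : False := by
  obtain ⟨-, -, hmin, hmax, hmid, -, -⟩ := hP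
  by_cases hlo : ∃ l < P.length, |P.getD l 0| < |P.getD i 0|
  · by_cases hhi : ∃ l < P.length, |P.getD i 0| < |P.getD l 0|
    · obtain ⟨l, -, hl⟩ := hmid i hi hlo hhi
      exact hjk ((hl j ⟨hj, hij.symm, hji⟩).trans (hl k ⟨hk, hik.symm, hki⟩).symm)
    · push Not at hhi
      exact hij (hmax.unique ⟨hi, hhi⟩ ⟨hj, fun l hl => hji ▸ hhi l hl⟩)
  · push Not at hlo
    exact hij (hmin.unique ⟨hi, hlo⟩ ⟨hj, fun l hl => hji ▸ hlo l hl⟩)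

theorem getD_eq_of_pair_reversed {a b : ℕ} (hP : IsPointerList P) (ha : a % 2 = 0)
    (haP : a + 1 < P.length) (hb : b % 2 = 0) (hbP : b + 1 < P.length)
    (hab : P.getD a 0 = P.getD (b + 1) 0)
    (hba : P.getD (a + 1) 0 = P.getD b 0) : P.getD a 0 = P.getD (a + 1) 0 :=
  le_antisymm (hP.2.2.2.2.2.1 a ha haP).1 (hab ▸ hba ▸ (hP.2.2.2.2.2.1 b hb hbP).1)

end IsPointerList

/-- no pointer list has the form [B, C, ..., C, B]. -/
theorem stmt2 (P : List ℤ) (hP : IsPointerList P) (hlen : 4 ≤ P.length)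
    (h1 : P.getD 0 0 = P.getD (P.length - 1) 0)
    (h2 : P.getD 1 0 = P.getD (P.length - 2) 0) :
    False := by
  have heven : P.length % 2 = 0 := hP.1
  have hBC : P.getD 0 0 = P.getD 1 0 :=
    hP.getD_eq_of_pair_reversed (b := P.length - 2) rfl (by omega) (by omega) (by omega)
      (by rwa [show P.length - 2 + 1 = P.length - 1 by omega]) h2
  exact hP.false_of_abs_eq_three (i := 0) (j := 1) (k := P.length - 2) (by omega) (by omega)
    (by omega) (by omega) (by omega) (by omega) (by rw [hBC]) (by rw [← h2, hBC])
end

section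
/- If P is a pointer list of length greater than 4, then P is not simultaneously a fixed point of cde, cdr, and cds; that is, at least one of cde(P) ≠ P, cdr(P) ≠ P, cds(P) ≠ P holds. -/
/-!
Applied at the least admissible `i`, both `cdr` and `cds` place a copy of `x_i` at position
`i + 1` (the entry `-x_j`, resp. `x_k`). So a common fixed point of `cde`, `cdr` and `cds` has no
equal neighbours, no entries `x_i = -x_j`, and no interleaved repeats `x_i = x_k`, `x_j = x_l`
with `i < j < k < l`.

In a pointer list this makes equal absolute values equal entries, so every entry other than the
minimum and the maximum occurs exactly twice. Take a repeat `x_i = x_j` with `j - i` minimal. The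
twin of an entry strictly between `i` and `j` would lie strictly between (a closer repeat) or
outside (an interleaving), so only the minimum and the maximum fit between: `j - i ∈ {2, 3}`. At
distance 2 two of the blocks `(x_{2p}, x_{2p+1})` share their first (or last) entry, hence both.
At distance 3 the minimum and maximum are `x_{i+1}, x_{i+2}`: if they form a block, `x_i` lies in
its gap; otherwise the blocks `(x_i, x_{i+1})` and `(x_{i+2}, x_i)` leave no absolute value for a
fifth entry.
-/

def AdjacentDistinct (P : List ℤ) : Prop :=
  ∀ i, i + 1 < P.length → P.getD i 0 ≠ P.getD (i + 1) 0

def NoOppositePair (P : List ℤ) : Prop :=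
  ∀ i j, i < j → j < P.length → P.getD i 0 ≠ -P.getD j 0

def NoInterleavedRepeat (P : List ℤ) : Prop :=
  ∀ i j k l, i < j → j < k → k < l → l < P.length →
    P.getD i 0 = P.getD k 0 → P.getD j 0 ≠ P.getD l 0

def IsExtremalIndex (P : List ℤ) (i : ℕ) : Prop :=
  (∀ j < P.length, |P.getD i 0| ≤ |P.getD j 0|) ∨ (∀ j < P.length, |P.getD j 0| ≤ |P.getD i 0|)

theorem exists_closest_pair {R : ℕ → ℕ → Prop} (h : ∃ i j, i < j ∧ R i j) :
    ∃ i j, i < j ∧ R i j ∧ ∀ i' j', i' < j' → R i' j' → j - i ≤ j' - i' := by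
  classical
  have hex : ∃ d, ∃ i, 0 < d ∧ R i (i + d) := by
    obtain ⟨i, j, hij, hR⟩ := h
    exact ⟨j - i, i, by omega, by rwa [Nat.add_sub_cancel' hij.le]⟩
  obtain ⟨i, hd, hR⟩ := Nat.find_spec hex
  refine ⟨i, i + Nat.find hex, by omega, hR, fun i' j' hij hR' => ?_⟩
  have := Nat.find_min' hex (m := j' - i') ⟨i', by omega, by rwa [Nat.add_sub_cancel' hij.le]⟩
  omega

section FixedPoints

variable {P : List ℤ}

theorem adjacentDistinct_of_cde_eq (h : cde P = P) : AdjacentDistinct P := by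
  intro i hi heq
  have hex : ∃ i, i + 1 < P.length ∧ P.getD i 0 = P.getD (i + 1) 0 := ⟨i, hi, heq⟩
  have hlt := (Nat.find_spec hex).1
  rw [cde, dif_pos hex] at h
  have := congrArg List.length h
  simp only [List.length_append, List.length_take, List.length_drop] at this
  omega

theorem AdjacentDistinct.take_succ_append_ne_self (hadj : AdjacentDistinct P) {i : ℕ}
    (hi : i + 1 < P.length) {L : List ℤ} (hL : L.getD 0 0 = P.getD i 0) :
    P.take (i + 1) ++ L ≠ P := by
  intro h
  apply hadj i hi
  have hL' : (P.take (i + 1) ++ L).getD (i + 1) 0 = L.getD 0 0 := by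
    rw [List.getD_append_right] <;> simp [Nat.min_eq_left hi.le]
  rw [← hL, ← hL', h]

theorem AdjacentDistinct.reversal_ne_self (hadj : AdjacentDistinct P) {i j : ℕ} (hij : i < j)
    (hj : j < P.length) (hval : P.getD i 0 = -P.getD j 0) :
    P.take (i + 1) ++ ((P.drop (i + 1)).take (j - i)).reverse.map (fun z => -z) ++
      P.drop (j + 1) ≠ P := by
  rw [List.append_assoc]
  refine hadj.take_succ_append_ne_self (by omega) ?_
  rw [hval, List.getD_append _ _ _ _ (by simp; omega), List.getD_eq_getElem _ _ (by simp; omega),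
    List.getD_eq_getElem _ _ hj]
  simp only [List.getElem_map, List.getElem_reverse, List.getElem_take, List.getElem_drop]
  congr 2
  simp
  omega

theorem AdjacentDistinct.blockSwap_ne_self (hadj : AdjacentDistinct P) {i j k l : ℕ}
    (hij : i < j) (hjk : j < k) (hkl : k < l) (hl : l < P.length)
    (hval : P.getD i 0 = P.getD k 0) :
    P.take (i + 1) ++ ((P.drop k).take (l - k + 1)) ++ ((P.drop j).take (k - j)) ++
      ((P.drop (i + 1)).take (j - i - 1)) ++ P.drop (l + 1) ≠ P := by
  simp only [List.append_assoc]
  refine hadj.take_succ_append_ne_self (by omega) ?_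
  rw [hval, List.getD_append _ _ _ _ (by simp; omega)]
  simp [List.getD_eq_getElem?_getD]

open Classical in
theorem AdjacentDistinct.noOppositePair_of_cdr_eq (hadj : AdjacentDistinct P) (h : cdr P = P) :
    NoOppositePair P := by
  intro i j hij hj heq
  have hex : ∃ i j, i < j ∧ j < P.length ∧ P.getD i 0 = -P.getD j 0 := ⟨i, j, hij, hj, heq⟩
  rw [cdr, dif_pos hex] at h
  obtain ⟨hIJ, hJ, hval⟩ := Nat.find_spec (Nat.find_spec hex)
  exact hadj.reversal_ne_self hIJ hJ hval h

open Classical in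
theorem AdjacentDistinct.noInterleavedRepeat_of_cds_eq (hadj : AdjacentDistinct P)
    (h : cds P = P) : NoInterleavedRepeat P := by
  intro i j k l hij hjk hkl hl hik hjl
  have hex : ∃ i j k l, i < j ∧ j < k ∧ k < l ∧ l < P.length ∧
      P.getD i 0 = P.getD k 0 ∧ P.getD j 0 = P.getD l 0 :=
    ⟨i, j, k, l, hij, hjk, hkl, hl, hik, hjl⟩
  rw [cds, dif_pos hex] at h
  obtain ⟨hIJ, hJK, hKL, hL, hval, -⟩ :=
    Nat.find_spec (Nat.find_spec (Nat.find_spec (Nat.find_spec hex)))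
  exact hadj.blockSwap_ne_self hIJ hJK hKL hL hval h

end FixedPoints

namespace IsPointerList

variable {P : List ℤ}

theorem succ_lt_length (hP : IsPointerList P) {i : ℕ} (hi : i % 2 = 0) (hil : i < P.length) :
    i + 1 < P.length := by
  have := hP.1
  omega

theorem getD_ne_zero (hP : IsPointerList P) {i : ℕ} (hi : i < P.length) : P.getD i 0 ≠ 0 := by
  have hpair := hP.2.2.2.2.2.1
  rcases Nat.mod_two_eq_zero_or_one i with h | h
  · exact left_ne_zero_of_mul (hpair i h (hP.succ_lt_length h hi)).2.ne'
  · obtain ⟨p, rfl⟩ : ∃ p, i = p + 1 := ⟨i - 1, by omega⟩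
    exact right_ne_zero_of_mul (hpair p (by omega) hi).2.ne'

theorem getD_eq_of_abs_eq (hP : IsPointerList P) (hopp : NoOppositePair P) {i j : ℕ}
    (hi : i < P.length) (hj : j < P.length) (h : |P.getD i 0| = |P.getD j 0|) :
    P.getD i 0 = P.getD j 0 := by
  refine (abs_eq_abs.mp h).resolve_right fun hneg => ?_
  rcases lt_trichotomy i j with hij | rfl | hji
  · exact hopp i j hij hj hneg
  · exact hP.getD_ne_zero hi (by omega)
  · exact hopp j i hji hi (by rw [hneg, neg_neg])

theorem not_between (hP : IsPointerList P) {i j : ℕ} (hi : i % 2 = 0) (hi1 : i + 1 < P.length)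
    (hj : j < P.length) :
    ¬ ((|P.getD i 0| < |P.getD j 0| ∧ |P.getD j 0| < |P.getD (i + 1) 0|) ∨
      (|P.getD (i + 1) 0| < |P.getD j 0| ∧ |P.getD j 0| < |P.getD i 0|)) :=
  fun h => hP.2.2.2.2.2.2 i hi hi1 ⟨j, hj, h⟩

theorem block_sign (hP : IsPointerList P) (hadj : AdjacentDistinct P) {p : ℕ} (hp : p % 2 = 0)
    (hp1 : p + 1 < P.length) :
    (0 < P.getD p 0 ∧ P.getD p 0 < P.getD (p + 1) 0) ∨
      (P.getD p 0 < P.getD (p + 1) 0 ∧ P.getD (p + 1) 0 < 0) := by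
  obtain ⟨-, -, -, -, -, hpair, -⟩ := hP
  obtain ⟨hle, hmul⟩ := hpair p hp hp1
  have hlt := lt_of_le_of_ne hle (hadj p hp1)
  rcases pos_and_pos_or_neg_and_neg_of_mul_pos hmul with h | h
  · exact .inl ⟨h.1, hlt⟩
  · exact .inr ⟨hlt, h.2⟩

theorem getD_eq_iff_getD_succ_eq (hP : IsPointerList P) (hadj : AdjacentDistinct P)
    (hopp : NoOppositePair P) {p q : ℕ} (hp : p % 2 = 0) (hq : q % 2 = 0)
    (hp1 : p + 1 < P.length) (hq1 : q + 1 < P.length) :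
    P.getD p 0 = P.getD q 0 ↔ P.getD (p + 1) 0 = P.getD (q + 1) 0 := by
  have hbp := hP.not_between hp hp1 (j := q) (by omega)
  have hbp1 := hP.not_between hp hp1 hq1
  have hbq := hP.not_between hq hq1 (j := p) (by omega)
  have hbq1 := hP.not_between hq hq1 hp1
  have hsp := hP.block_sign hadj hp hp1
  have hsq := hP.block_sign hadj hq hq1
  constructor <;> intro h <;> apply hP.getD_eq_of_abs_eq hopp (by omega) (by omega) <;>
    rcases hsp with hsp | hsp <;> rcases hsq with hsq | hsq <;>
    cases abs_cases (P.getD p 0) <;> cases abs_cases (P.getD q 0) <;>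
    cases abs_cases (P.getD (p + 1) 0) <;> cases abs_cases (P.getD (q + 1) 0) <;> omega

theorem eq_of_isExtremalIndex (hP : IsPointerList P) {a b c : ℕ} (ha : a < P.length)
    (hb : b < P.length) (hc : c < P.length) (hxa : IsExtremalIndex P a)
    (hxb : IsExtremalIndex P b) (hxc : IsExtremalIndex P c) (hab : a ≠ b) (hbc : b ≠ c) :
    a = c := by
  obtain ⟨-, -, hmin, hmax, -⟩ := hP
  rcases hxa with hxa | hxa <;> rcases hxb with hxb | hxb <;> rcases hxc with hxc | hxc <;>
    first
    | exact hmin.unique ⟨ha, hxa⟩ ⟨hc, hxc⟩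
    | exact hmax.unique ⟨ha, hxa⟩ ⟨hc, hxc⟩
    | exact absurd (hmin.unique ⟨ha, hxa⟩ ⟨hb, hxb⟩) hab
    | exact absurd (hmax.unique ⟨ha, hxa⟩ ⟨hb, hxb⟩) hab
    | exact absurd (hmin.unique ⟨hb, hxb⟩ ⟨hc, hxc⟩) hbc
    | exact absurd (hmax.unique ⟨hb, hxb⟩ ⟨hc, hxc⟩) hbc

theorem exists_unique_twin (hP : IsPointerList P) {i : ℕ} (hi : i < P.length)
    (hxi : ¬ IsExtremalIndex P i) :
    ∃! j, j < P.length ∧ j ≠ i ∧ |P.getD j 0| = |P.getD i 0| := by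
  simp only [IsExtremalIndex, not_or, not_forall, not_le] at hxi
  obtain ⟨⟨j, hj, hlt⟩, ⟨k, hk, hgt⟩⟩ := hxi
  exact hP.2.2.2.2.1 i hi ⟨j, hj, hlt⟩ ⟨k, hk, hgt⟩

theorem eq_of_getD_eq (hP : IsPointerList P) {a b c : ℕ} (ha : a < P.length)
    (hb : b < P.length) (hc : c < P.length) (hab : a ≠ b) (hac : a ≠ c)
    (hba : P.getD b 0 = P.getD a 0) (hca : P.getD c 0 = P.getD a 0) : b = c := by
  by_cases hxa : IsExtremalIndex P a
  · obtain ⟨-, -, hmin, hmax, -⟩ := hP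
    rcases hxa with hxa | hxa
    · exact absurd (hmin.unique ⟨ha, hxa⟩ ⟨hb, by rwa [hba]⟩) hab
    · exact absurd (hmax.unique ⟨ha, hxa⟩ ⟨hb, by rwa [hba]⟩) hab
  · exact (hP.exists_unique_twin ha hxa).unique ⟨hb, hab.symm, by rw [hba]⟩
      ⟨hc, hac.symm, by rw [hca]⟩

theorem between_of_isExtremalIndex (hP : IsPointerList P) {a b k : ℕ} (ha : a < P.length)
    (hb : b < P.length) (hxa : IsExtremalIndex P a) (hxb : IsExtremalIndex P b) (hab : a ≠ b)
    (hxk : ¬ IsExtremalIndex P k) :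
    (|P.getD a 0| < |P.getD k 0| ∧ |P.getD k 0| < |P.getD b 0|) ∨
      (|P.getD b 0| < |P.getD k 0| ∧ |P.getD k 0| < |P.getD a 0|) := by
  obtain ⟨-, -, hmin, hmax, -⟩ := hP
  simp only [IsExtremalIndex, not_or, not_forall, not_le] at hxk
  obtain ⟨⟨j, hj, hlt⟩, ⟨l, hl, hgt⟩⟩ := hxk
  rcases hxa with hxa | hxa <;> rcases hxb with hxb | hxb
  · exact absurd (hmin.unique ⟨ha, hxa⟩ ⟨hb, hxb⟩) hab
  · exact .inl ⟨(hxa j hj).trans_lt hlt, hgt.trans_le (hxb l hl)⟩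
  · exact .inr ⟨(hxb j hj).trans_lt hlt, hgt.trans_le (hxa l hl)⟩
  · exact absurd (hmax.unique ⟨ha, hxa⟩ ⟨hb, hxb⟩) hab

theorem exists_lt_getD_eq (hP : IsPointerList P) (hopp : NoOppositePair P)
    (hlen : 3 ≤ P.length) : ∃ i j, i < j ∧ j < P.length ∧ P.getD i 0 = P.getD j 0 := by
  obtain ⟨w, hw, hxw⟩ : ∃ w < P.length, ¬ IsExtremalIndex P w := by
    by_contra! h
    have := hP.eq_of_isExtremalIndex (a := 0) (b := 1) (c := 2) (by omega) (by omega)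
      (by omega) (h 0 (by omega)) (h 1 (by omega)) (h 2 (by omega)) (by omega) (by omega)
    omega
  obtain ⟨w', ⟨hw', hw'w, habs⟩, -⟩ := hP.exists_unique_twin hw hxw
  have heq := hP.getD_eq_of_abs_eq hopp hw' hw habs
  rcases lt_or_gt_of_ne hw'w with h | h
  · exact ⟨w', w, h, hw, heq⟩
  · exact ⟨w, w', h, hw', heq.symm⟩

theorem isExtremalIndex_of_closest_pair (hP : IsPointerList P) (hopp : NoOppositePair P)
    (hint : NoInterleavedRepeat P) {i j : ℕ} (hij : i < j) (hj : j < P.length)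
    (hrep : P.getD i 0 = P.getD j 0)
    (hmin : ∀ i' j', i' < j' → j' < P.length ∧ P.getD i' 0 = P.getD j' 0 → j - i ≤ j' - i')
    {w : ℕ} (hiw : i < w) (hwj : w < j) : IsExtremalIndex P w := by
  by_contra hxw
  obtain ⟨w', ⟨hw', hw'w, habs⟩, -⟩ := hP.exists_unique_twin (by omega) hxw
  have heq := hP.getD_eq_of_abs_eq hopp hw' (by omega) habs
  have hwi : P.getD w 0 ≠ P.getD i 0 := fun h =>
    absurd (hP.eq_of_getD_eq (by omega) hj (by omega) hij.ne hiw.ne hrep.symm h) hwj.ne'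
  rcases lt_trichotomy w' i with hw'i | rfl | hiw'
  · exact hint w' i w j hw'i hiw hwj hj heq hrep
  · exact hwi heq.symm
  rcases lt_trichotomy w' j with hw'j | rfl | hjw'
  · rcases lt_or_gt_of_ne hw'w with h | h
    · have := hmin w' w h ⟨by omega, heq⟩
      omega
    · have := hmin w w' h ⟨hw', heq.symm⟩
      omega
  · exact hwi (heq.symm.trans hrep.symm)
  · exact hint i w j w' hiw hwj hjw' hw' hrep heq.symm

theorem getD_ne_getD_add_two (hP : IsPointerList P) (hadj : AdjacentDistinct P)
    (hopp : NoOppositePair P) (hint : NoInterleavedRepeat P) {i : ℕ} (hi : i + 2 < P.length) :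
    P.getD i 0 ≠ P.getD (i + 2) 0 := by
  intro hrep
  rcases Nat.mod_two_eq_zero_or_one i with hi2 | hi2
  · have hi3 := hP.succ_lt_length (by omega) hi
    exact hint i (i + 1) (i + 2) (i + 3) (by omega) (by omega) (by omega) hi3 hrep
      ((hP.getD_eq_iff_getD_succ_eq hadj hopp hi2 (by omega) (by omega) hi3).mp hrep)
  · obtain ⟨p, rfl⟩ : ∃ p, i = p + 1 := ⟨i - 1, by omega⟩
    exact hint p (p + 1) (p + 2) (p + 3) (by omega) (by omega) (by omega) hi
      ((hP.getD_eq_iff_getD_succ_eq hadj hopp (by omega) (by omega) (by omega) hi).mpr hrep)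
      hrep

theorem length_le_four_of_getD_eq_getD_add_three (hP : IsPointerList P)
    (hopp : NoOppositePair P) {i : ℕ} (hi : i + 3 < P.length)
    (hrep : P.getD i 0 = P.getD (i + 3) 0) (hx1 : IsExtremalIndex P (i + 1))
    (hx2 : IsExtremalIndex P (i + 2)) : P.length ≤ 4 := by
  by_contra! hlen
  have hxk : ∀ k < P.length, k ≠ i + 1 → k ≠ i + 2 → ¬ IsExtremalIndex P k := fun k hk h1 h2 hxk =>
    h2 (hP.eq_of_isExtremalIndex hk (by omega) (by omega) hxk hx1 hx2 h1 (by omega))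
  have hbetween := fun k hk h1 h2 => hP.between_of_isExtremalIndex (by omega) (by omega) hx1 hx2
    (by omega) (hxk k hk h1 h2)
  have hbi := hbetween i (by omega) (by omega) (by omega)
  rcases Nat.mod_two_eq_zero_or_one i with hi2 | hi2
  · -- an entry outside the two blocks would need an absolute value in one of their gaps
    obtain ⟨k, hk, hki⟩ : ∃ k < P.length, k < i ∨ i + 3 < k :=
      if h : i = 0 then ⟨4, hlen, by omega⟩ else ⟨0, by omega, by omega⟩
    have hbk := hbetween k hk (by omega) (by omega)
    have hki' : |P.getD k 0| ≠ |P.getD i 0| := fun h => by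
      have := hP.eq_of_getD_eq (by omega) hi hk (by omega) (by omega) hrep.symm
        (hP.getD_eq_of_abs_eq hopp hk (by omega) h)
      omega
    have h1 := hP.not_between hi2 (by omega) hk
    have h2 := hP.not_between (i := i + 2) (by omega) hi hk
    rw [show i + 2 + 1 = i + 3 from rfl, ← hrep] at h2
    omega
  · exact hP.not_between (i := i + 1) (by omega) (by omega) (by omega : i < P.length) hbi

theorem length_le_four (hP : IsPointerList P) (hadj : AdjacentDistinct P)
    (hopp : NoOppositePair P) (hint : NoInterleavedRepeat P) : P.length ≤ 4 := by
  by_contra! hlen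
  obtain ⟨i, j, hij, ⟨hj, hrep⟩, hmin⟩ := exists_closest_pair (hP.exists_lt_getD_eq hopp (by omega))
  have hext := fun w => hP.isExtremalIndex_of_closest_pair hopp hint hij hj hrep hmin (w := w)
  have hj1 : j ≠ i + 1 := by
    rintro rfl
    exact hadj i hj hrep
  have hj2 : j ≠ i + 2 := by
    rintro rfl
    exact hP.getD_ne_getD_add_two hadj hopp hint hj hrep
  have hj3 : j ≤ i + 3 := by
    by_contra! hj3
    have := hP.eq_of_isExtremalIndex (by omega) (by omega) (by omega)
      (hext (i + 1) (by omega) (by omega)) (hext (i + 2) (by omega) (by omega))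
      (hext (i + 3) (by omega) (by omega)) (by omega) (by omega)
    omega
  obtain rfl : j = i + 3 := by omega
  have := hP.length_le_four_of_getD_eq_getD_add_three hopp hj hrep
    (hext (i + 1) (by omega) (by omega)) (hext (i + 2) (by omega) (by omega))
  omega

end IsPointerList

/-- a pointer list of length > 4 is not simultaneously a fixed
point of cde, cdr and cds. -/
theorem stmt5 (P : List ℤ) (hP : IsPointerList P) (hlen : 4 < P.length) :
    cde P ≠ P ∨ cdr P ≠ P ∨ cds P ≠ P := by
  by_contra! ⟨hcde, hcdr, hcds⟩
  have hadj := adjacentDistinct_of_cde_eq hcde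
  have := hP.length_le_four hadj (hadj.noOppositePair_of_cdr_eq hcdr)
    (hadj.noInterleavedRepeat_of_cds_eq hcds)
  omega
end

section
/- If P is a pointer list, then cde(P) is a pointer list. -/
/-! Since the minimum and the maximum absolute value are each attained only once, a repeated
entry `x i = x (i + 1)` has intermediate absolute value, so by (4) no other entry shares it.
Deleting the two copies therefore preserves (2)–(4). The pairs of the shortened list are old
pairs, except for `(x (i - 1), x (i + 2))` when `i` is odd; this one inherits (5) and (6) from the
old pairs `(x (i - 1), x i)` and `(x (i + 1), x (i + 2))`, glued along `x i = x (i + 1)`. -/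

section Reindex

variable {α : Type*} [LinearOrder α] {m n : ℕ} {e : ℕ → ℕ} {f g : ℕ → α}

theorem exists_lt_of_existsUnique_min_s6 {a b : ℕ} (h : ∃! i, i < n ∧ ∀ j < n, f i ≤ f j)
    (ha : a < n) (hb : b < n) (hab : a ≠ b) (heq : f a = f b) : ∃ j < n, f j < f a := by
  by_contra! hc
  obtain ⟨i, -, hi⟩ := h
  exact hab ((hi a ⟨ha, hc⟩).trans (hi b ⟨hb, heq ▸ hc⟩).symm)

variable (hmaps : Set.MapsTo e (Set.Iio m) (Set.Iio n)) (hinj : Set.InjOn e (Set.Iio m))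
  (hg : Set.EqOn g (f ∘ e) (Set.Iio m))
include hmaps hinj hg

theorem existsUnique_min_of_reindex
    (hmiss : ∀ j ∈ Set.Iio n \ e '' Set.Iio m, ∃ j' < n, f j' < f j)
    (h : ∃! i, i < n ∧ ∀ j < n, f i ≤ f j) : ∃! k, k < m ∧ ∀ j < m, g k ≤ g j := by
  obtain ⟨i, ⟨hi, hmin⟩, huniq⟩ := h
  obtain ⟨k, hk, rfl⟩ : i ∈ e '' Set.Iio m := by
    by_contra hi'
    obtain ⟨j, hj, hlt⟩ := hmiss i ⟨hi, hi'⟩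
    exact (hmin j hj).not_gt hlt
  have hgmin : ∀ j < m, g k ≤ g j := fun j hj => by
    rw [hg hk, hg hj]; exact hmin _ (hmaps hj)
  refine ⟨k, ⟨hk, hgmin⟩, fun y ⟨hy, hymin⟩ => hinj hy hk (huniq _ ⟨hmaps hy, fun j hj => ?_⟩)⟩
  calc f (e y) = g y := (hg hy).symm
    _ ≤ g k := hymin k hk
    _ = f (e k) := hg hk
    _ ≤ f j := hmin j hj

theorem existsUnique_partner_of_reindex
    (hmiss : ∀ j ∈ Set.Iio n \ e '' Set.Iio m, ∀ k < m, f j ≠ f (e k))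
    (h : ∀ i < n, (∃ j < n, f j < f i) → (∃ j < n, f i < f j) →
      ∃! j, j < n ∧ j ≠ i ∧ f j = f i) :
    ∀ k < m, (∃ j < m, g j < g k) → (∃ j < m, g k < g j) →
      ∃! j, j < m ∧ j ≠ k ∧ g j = g k := by
  rintro k hk ⟨a, ha, hak⟩ ⟨b, hb, hkb⟩
  rw [hg ha, hg hk] at hak
  rw [hg hb, hg hk] at hkb
  obtain ⟨p, ⟨hp, hpk, hpv⟩, hpu⟩ := h (e k) (hmaps hk) ⟨e a, hmaps ha, hak⟩ ⟨e b, hmaps hb, hkb⟩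
  obtain ⟨q, hq, rfl⟩ : p ∈ e '' Set.Iio m := by
    by_contra hp'
    exact hmiss p ⟨hp, hp'⟩ k hk hpv
  refine ⟨q, ⟨hq, fun hqk => hpk (hqk ▸ rfl), by rw [hg hq, hg hk]; exact hpv⟩, ?_⟩
  rintro y ⟨hy, hyk, hyv⟩
  rw [hg hy, hg hk] at hyv
  exact hinj hy hq (hpu _ ⟨hmaps hy, fun h => hyk (hinj hy hk h), hyv⟩)

end Reindex

theorem lt_lt_or_lt_lt_of_ne {α : Type*} [LinearOrder α] {a b c x : α}
    (h : a < x ∧ x < b ∨ b < x ∧ x < a) (hx : x ≠ c) :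
    (a < x ∧ x < c ∨ c < x ∧ x < a) ∨ (c < x ∧ x < b ∨ b < x ∧ x < c) := by
  rcases lt_or_gt_of_ne hx with hc | hc <;> tauto

theorem mul_pos_of_mul_pos_of_mul_pos {R : Type*} [Ring R] [LinearOrder R] [IsStrictOrderedRing R]
    {a b c : R} (hab : 0 < a * b) (hbc : 0 < b * c) : 0 < a * c := by
  rcases mul_pos_iff.mp hab with ⟨ha, hb⟩ | ⟨ha, hb⟩ <;>
    rcases mul_pos_iff.mp hbc with ⟨hb', hc⟩ | ⟨hb', hc⟩
  · exact mul_pos ha hc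
  · exact absurd hb hb'.not_gt
  · exact absurd hb hb'.not_gt
  · exact mul_pos_of_neg_of_neg ha hc

def skipPair (i k : ℕ) : ℕ := if k < i then k else k + 2

theorem skipPair_injective (i : ℕ) : Function.Injective (skipPair i) := by
  intro a b h; unfold skipPair at h; split_ifs at h <;> omega

theorem skipPair_ne (i k : ℕ) : skipPair i k ≠ i ∧ skipPair i k ≠ i + 1 := by
  unfold skipPair; split_ifs <;> omega

theorem mapsTo_skipPair (i n : ℕ) : Set.MapsTo (skipPair i) (Set.Iio (n - 2)) (Set.Iio n) := by
  intro k hk; simp only [Set.mem_Iio] at hk ⊢; unfold skipPair; split_ifs <;> omega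

theorem mem_image_skipPair {i n j : ℕ} (hi : i + 1 < n) (hj : j < n) (hji : j ≠ i)
    (hji' : j ≠ i + 1) : j ∈ skipPair i '' Set.Iio (n - 2) := by
  refine ⟨if j < i then j else j - 2, ?_, ?_⟩
  · simp only [Set.mem_Iio]; split_ifs <;> omega
  · unfold skipPair; split_ifs <;> omega

theorem List.getD_take_append_drop_add_two {β : Type*} (l : List β) (i k : ℕ) (d : β) :
    (l.take i ++ l.drop (i + 2)).getD k d = l.getD (skipPair i k) d := by
  simp only [List.getD_eq_getElem?_getD, List.getElem?_append, List.getElem?_take,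
    List.getElem?_drop, List.length_take, skipPair]
  split_ifs with hk hki hki
  · rfl
  · omega
  · rw [List.getElem?_eq_none (by omega), List.getElem?_eq_none (by omega)]
  · rcases le_or_gt i l.length with hil | hil
    · rw [min_eq_left hil, show i + 2 + (k - i) = k + 2 by omega]
    · rw [List.getElem?_eq_none (by omega), List.getElem?_eq_none (by omega)]

theorem List.length_take_append_drop_add_two {β : Type*} {l : List β} {i : ℕ}
    (hi : i + 1 < l.length) : (l.take i ++ l.drop (i + 2)).length = l.length - 2 := by
  simp only [List.length_append, List.length_take, List.length_drop]
  omega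

theorem skipPair_pair {i k n : ℕ} (hk : k % 2 = 0) (hkn : k + 1 < n - 2) :
    (∃ k', k' % 2 = 0 ∧ k' + 1 < n ∧ skipPair i k = k' ∧ skipPair i (k + 1) = k' + 1) ∨
      (i = k + 1 ∧ k + 3 < n ∧ skipPair i k = k ∧ skipPair i (k + 1) = k + 3) := by
  unfold skipPair
  rcases lt_trichotomy (k + 1) i with h | rfl | h
  · exact Or.inl ⟨k, hk, by omega, if_pos (by omega), if_pos h⟩
  · exact Or.inr ⟨rfl, by omega, if_pos (by omega), if_neg (by omega)⟩
  · exact Or.inl ⟨k + 2, by omega, by omega, if_neg (by omega), if_neg (by omega)⟩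

namespace IsPointerList

variable {P : List ℤ} {i : ℕ} (hP : IsPointerList P) (hi : i + 1 < P.length)
  (heq : P.getD i 0 = P.getD (i + 1) 0)
include hP hi heq

theorem exists_abs_lt_of_getD_eq : ∃ j < P.length, |P.getD j 0| < |P.getD i 0| :=
  exists_lt_of_existsUnique_min_s6 (f := fun j => |P.getD j 0|) hP.2.2.1 (by omega) hi
    (by omega) (by rw [heq])

theorem exists_abs_gt_of_getD_eq : ∃ j < P.length, |P.getD i 0| < |P.getD j 0| :=
  exists_lt_of_existsUnique_min_s6 (α := ℤᵒᵈ) (f := fun j => OrderDual.toDual |P.getD j 0|)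
    hP.2.2.2.1 (by omega) hi (by omega) (by rw [heq])

theorem abs_getD_ne_of_getD_eq {j : ℕ} (hj : j < P.length) (hji : j ≠ i) (hji' : j ≠ i + 1) :
    |P.getD j 0| ≠ |P.getD i 0| := by
  intro habs
  obtain ⟨p, -, hp⟩ := hP.2.2.2.2.1 i (by omega) (hP.exists_abs_lt_of_getD_eq hi heq)
    (hP.exists_abs_gt_of_getD_eq hi heq)
  exact hji' ((hp j ⟨hj, hji, habs⟩).trans (hp (i + 1) ⟨hi, by omega, by rw [heq]⟩).symm)

theorem pair_take_append_drop_of_getD_eq :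
    ∀ k, k % 2 = 0 → k + 1 < (P.take i ++ P.drop (i + 2)).length →
      (P.take i ++ P.drop (i + 2)).getD k 0 ≤ (P.take i ++ P.drop (i + 2)).getD (k + 1) 0 ∧
      0 < (P.take i ++ P.drop (i + 2)).getD k 0 * (P.take i ++ P.drop (i + 2)).getD (k + 1) 0 := by
  obtain ⟨-, -, -, -, -, hpair, -⟩ := hP
  intro k hk hkn
  rw [List.length_take_append_drop_add_two hi] at hkn
  simp only [List.getD_take_append_drop_add_two]
  rcases skipPair_pair (i := i) hk hkn with ⟨k', hk', hk'n, h0, h1⟩ | ⟨rfl, hk3, h0, h1⟩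
  · rw [h0, h1]; exact hpair k' hk' hk'n
  · rw [h0, h1]
    obtain ⟨hle, hpos⟩ := hpair k hk (by omega)
    obtain ⟨hle', hpos'⟩ : P.getD (k + 2) 0 ≤ P.getD (k + 3) 0 ∧
        0 < P.getD (k + 2) 0 * P.getD (k + 3) 0 := hpair (k + 2) (by omega) (by omega)
    rw [← heq] at hle' hpos'
    exact ⟨hle.trans hle', mul_pos_of_mul_pos_of_mul_pos hpos hpos'⟩

theorem not_between_take_append_drop_of_getD_eq :
    ∀ k, k % 2 = 0 → k + 1 < (P.take i ++ P.drop (i + 2)).length →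
      ¬ ∃ j < (P.take i ++ P.drop (i + 2)).length,
        (|(P.take i ++ P.drop (i + 2)).getD k 0| < |(P.take i ++ P.drop (i + 2)).getD j 0| ∧
          |(P.take i ++ P.drop (i + 2)).getD j 0| < |(P.take i ++ P.drop (i + 2)).getD (k + 1) 0|) ∨
        (|(P.take i ++ P.drop (i + 2)).getD (k + 1) 0| < |(P.take i ++ P.drop (i + 2)).getD j 0| ∧
          |(P.take i ++ P.drop (i + 2)).getD j 0| < |(P.take i ++ P.drop (i + 2)).getD k 0|) := by
  intro k hk hkn ⟨j, hj, hbetween⟩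
  rw [List.length_take_append_drop_add_two hi] at hkn hj
  simp only [List.getD_take_append_drop_add_two] at hbetween
  have hjn := mapsTo_skipPair i P.length hj
  have hne := hP.abs_getD_ne_of_getD_eq hi heq hjn (skipPair_ne _ _).1 (skipPair_ne _ _).2
  obtain ⟨-, -, -, -, -, -, hgap⟩ := hP
  rcases skipPair_pair (i := i) hk hkn with ⟨k', hk', hk'n, h0, h1⟩ | ⟨rfl, hk3, h0, h1⟩
  · rw [h0, h1] at hbetween
    exact hgap k' hk' hk'n ⟨_, hjn, hbetween⟩
  · rw [h0, h1] at hbetween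
    rcases lt_lt_or_lt_lt_of_ne hbetween hne with hleft | hright
    · exact hgap k hk (by omega) ⟨_, hjn, hleft⟩
    · rw [heq] at hright
      exact hgap (k + 2) (by omega) (by omega) ⟨_, hjn, hright⟩

theorem take_append_drop_of_getD_eq : IsPointerList (P.take i ++ P.drop (i + 2)) := by
  set Q := P.take i ++ P.drop (i + 2) with hQ
  have hlen : Q.length = P.length - 2 := List.length_take_append_drop_add_two hi
  have hmaps : Set.MapsTo (skipPair i) (Set.Iio Q.length) (Set.Iio P.length) :=
    hlen ▸ mapsTo_skipPair i P.length
  have hinj : Set.InjOn (skipPair i) (Set.Iio Q.length) := (skipPair_injective i).injOn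
  have hg : Set.EqOn (fun k => |Q.getD k 0|) ((fun j => |P.getD j 0|) ∘ skipPair i)
      (Set.Iio Q.length) := fun k _ => by
    simp only [hQ, Function.comp_apply, List.getD_take_append_drop_add_two]
  have hmissed : ∀ j ∈ Set.Iio P.length \ skipPair i '' Set.Iio Q.length, j = i ∨ j = i + 1 := by
    rintro j ⟨hj, hj'⟩
    by_contra! h
    exact hj' (hlen ▸ mem_image_skipPair hi hj h.1 h.2)
  have hlt := hP.exists_abs_lt_of_getD_eq hi heq
  have hgt := hP.exists_abs_gt_of_getD_eq hi heq
  have hne : ∀ k < Q.length, |P.getD (skipPair i k) 0| ≠ |P.getD i 0| := fun k hk =>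
    hP.abs_getD_ne_of_getD_eq hi heq (hmaps hk) (skipPair_ne i k).1 (skipPair_ne i k).2
  have hpair := hP.pair_take_append_drop_of_getD_eq hi heq
  have hgap := hP.not_between_take_append_drop_of_getD_eq hi heq
  obtain ⟨hev, -, hmin, hmax, hpartner, -⟩ := hP
  refine ⟨by omega, ?_, ?_, ?_, ?_, hpair, hgap⟩
  · obtain ⟨j, hj, hji⟩ := hlt
    have hj_ne : j ≠ i ∧ j ≠ i + 1 := by
      constructor <;> rintro rfl <;> simp only [heq, lt_self_iff_false] at hji
    omega
  · refine existsUnique_min_of_reindex hmaps hinj hg (fun j hj => ?_) hmin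
    rcases hmissed j hj with rfl | rfl
    exacts [hlt, by rw [← heq]; exact hlt]
  · refine existsUnique_min_of_reindex (α := ℤᵒᵈ) hmaps hinj hg (fun j hj => ?_) hmax
    rcases hmissed j hj with rfl | rfl
    exacts [hgt, by rw [← heq]; exact hgt]
  · refine existsUnique_partner_of_reindex hmaps hinj hg (fun j hj k hk => ?_) hpartner
    rcases hmissed j hj with rfl | rfl
    exacts [(hne k hk).symm, by rw [← heq]; exact (hne k hk).symm]

end IsPointerList

/-- cde preserves pointer lists. -/
theorem stmt6 (P : List ℤ) (hP : IsPointerList P) :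
    IsPointerList (cde P) := by
  unfold cde
  split_ifs with h
  · exact hP.take_append_drop_of_getD_eq (Nat.find_spec h).1 (Nat.find_spec h).2
  · exact hP
end

section
/- If P is a pointer list of length greater than 4 and cdr(P) ≠ P, then cde(cdr(P)) ≠ cdr(P); i.e., after a nontrivial context-directed reversal, a context-directed excision is applicable. -/
/-! After `cdr` reverses and negates the segment `x_{i+1}, …, x_j` behind `x_i = -x_j`, the
entry `-x_j = x_i` lands at position `i + 1`, right next to `x_i`; that equal adjacent pair is
what `cde` excises. -/

namespace List

def negReverseSegment (P : List ℤ) (i j : ℕ) : List ℤ :=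
  P.take (i+1) ++ ((P.drop (i+1)).take (j - i)).reverse.map (fun z => -z) ++ P.drop (j+1)

theorem length_negReverseSegment (P : List ℤ) {i j : ℕ} (hij : i < j) (hj : j < P.length) :
    (P.negReverseSegment i j).length = P.length := by
  simp only [negReverseSegment, length_append, length_take, length_map, length_reverse,
    length_drop]
  omega

theorem getD_negReverseSegment_self (P : List ℤ) {i j : ℕ} (hi : i < P.length) :
    (P.negReverseSegment i j).getD i 0 = P.getD i 0 := by
  have hi' : i < (P.take (i+1)).length := by simp; omega
  simp only [negReverseSegment, getD_eq_getElem?_getD, append_assoc, getElem?_append_left hi',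
    getElem?_take_of_lt (Nat.lt_succ_self i)]

theorem getD_negReverseSegment_succ (P : List ℤ) {i j : ℕ} (hij : i < j) (hj : j < P.length) :
    (P.negReverseSegment i j).getD (i+1) 0 = -P.getD j 0 := by
  set B := (P.drop (i+1)).take (j - i)
  have hA : (P.take (i+1)).length = i + 1 := by simp; omega
  have hB : B.length = j - i := by simp [B]; omega
  have hB0 : 0 < (B.reverse.map (fun z => -z)).length := by simp; omega
  have hlast : B[B.length - 1 - 0]? = P[j]? := by
    rw [getElem?_take_of_lt (by omega), getElem?_drop, hB]; congr 1; omega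
  rw [negReverseSegment, append_assoc, getD_append_right _ _ _ _ hA.le, hA, Nat.sub_self,
    getD_append _ _ _ _ hB0, getD_eq_getElem?_getD, getElem?_map, getElem?_reverse (by omega),
    hlast, getD_eq_getElem?_getD]
  cases P[j]? <;> simp

end List

theorem exists_cdr_eq_negReverseSegment {P : List ℤ} (h : cdr P ≠ P) :
    ∃ i j, i < j ∧ j < P.length ∧ P.getD i 0 = -P.getD j 0 ∧
      cdr P = P.negReverseSegment i j := by
  classical
  have hex : ∃ i j, i < j ∧ j < P.length ∧ P.getD i 0 = -P.getD j 0 := by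
    by_contra hex
    exact h (by rw [cdr, dif_neg hex])
  obtain ⟨hij, hj, hval⟩ := Nat.find_spec (Nat.find_spec hex)
  exact ⟨_, _, hij, hj, hval, by rw [cdr, dif_pos hex]; rfl⟩

theorem cde_ne_self_of_getD_eq_getD_succ {L : List ℤ} {k : ℕ} (hk : k + 1 < L.length)
    (h : L.getD k 0 = L.getD (k+1) 0) : cde L ≠ L := by
  classical
  have hex : ∃ k, k + 1 < L.length ∧ L.getD k 0 = L.getD (k+1) 0 := ⟨k, hk, h⟩
  have hfirst := (Nat.find_spec hex).1
  intro hcde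
  have hlen := congrArg List.length hcde
  rw [cde, dif_pos hex] at hlen
  simp only [List.length_append, List.length_take, List.length_drop] at hlen
  omega

theorem stmt9_general (P : List ℤ) (h : cdr P ≠ P) :
    cde (cdr P) ≠ cdr P := by
  obtain ⟨i, j, hij, hj, hval, hcdr⟩ := exists_cdr_eq_negReverseSegment h
  rw [hcdr]
  apply cde_ne_self_of_getD_eq_getD_succ (k := i)
  · rw [P.length_negReverseSegment hij hj]; omega
  · rw [P.getD_negReverseSegment_self (by omega), P.getD_negReverseSegment_succ hij hj, hval]

/-- after a nontrivial cdr on a pointer list of length > 4,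
a cde is applicable. -/
theorem stmt9 (P : List ℤ) (hP : IsPointerList P) (hlen : 4 < P.length)
    (h : cdr P ≠ P) :
    cde (cdr P) ≠ cdr P :=
  stmt9_general P h
end

section
/- If P is a pointer list of length greater than 4 and cds(P) ≠ P, then cde(cds(P)) ≠ cds(P); i.e., after a nontrivial context-directed block swap, a context-directed excision is applicable. -/
/-! The block swap moves `x_k`, which equals `x_i`, directly behind `x_i`, so it always creates
an adjacent equal pair for `cde` to excise. -/

/-- The list produced by `cds` once its indices `i < j < k < l` are chosen. -/
def blockSwap {α : Type*} (P : List α) (i j k l : ℕ) : List α :=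
  P.take (i+1) ++ (P.drop k).take (l - k + 1) ++ (P.drop j).take (k - j) ++
    (P.drop (i+1)).take (j - i - 1) ++ P.drop (l+1)

section blockSwap

variable {α : Type*} {P : List α} {i j k l : ℕ}

theorem length_blockSwap (hij : i < j) (hjk : j ≤ k) (hkl : k ≤ l) (hl : l < P.length) :
    (blockSwap P i j k l).length = P.length := by
  simp only [blockSwap, List.length_append, List.length_take, List.length_drop]
  omega

theorem getElem?_blockSwap_self (hik : i < k) (hk : k < P.length) :
    (blockSwap P i j k l)[i]? = P[i]? := by
  have hA : i < (P.take (i+1)).length := by simp only [List.length_take]; omega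
  simp only [blockSwap, List.append_assoc, List.getElem?_append_left hA,
    List.getElem?_take_of_lt (Nat.lt_succ_self i)]

theorem getElem?_blockSwap_succ (hik : i < k) (hk : k < P.length) :
    (blockSwap P i j k l)[i + 1]? = P[k]? := by
  have hA : (P.take (i+1)).length = i + 1 := by simp only [List.length_take]; omega
  rw [blockSwap, List.append_assoc, List.append_assoc, List.append_assoc,
    List.getElem?_append_right hA.le, hA, Nat.sub_self, List.getElem?_append_left
      (by simp only [List.length_take, List.length_drop]; omega),
    List.getElem?_take_of_lt (by omega), List.getElem?_drop, add_zero]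

end blockSwap

theorem cde_ne_self_of_getD_eq {Q : List ℤ} {m : ℕ} (hm : m + 1 < Q.length)
    (he : Q.getD m 0 = Q.getD (m+1) 0) : cde Q ≠ Q := by
  have hx : ∃ i, i + 1 < Q.length ∧ Q.getD i 0 = Q.getD (i+1) 0 := ⟨m, hm, he⟩
  intro heq
  have hlen := congrArg List.length heq
  rw [cde, dif_pos hx] at hlen
  simp only [List.length_append, List.length_take, List.length_drop] at hlen
  have := (Nat.find_spec hx).1
  omega

theorem exists_blockSwap_of_cds_ne_self {P : List ℤ} (h : cds P ≠ P) :
    ∃ i j k l, i < j ∧ j < k ∧ k < l ∧ l < P.length ∧ P.getD i 0 = P.getD k 0 ∧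
      cds P = blockSwap P i j k l := by
  classical
  by_cases hx : ∃ i j k l, i < j ∧ j < k ∧ k < l ∧ l < P.length ∧
      P.getD i 0 = P.getD k 0 ∧ P.getD j 0 = P.getD l 0
  · obtain ⟨hij, hjk, hkl, hl, hik, -⟩ :=
      Nat.find_spec (Nat.find_spec (Nat.find_spec (Nat.find_spec hx)))
    refine ⟨_, _, _, _, hij, hjk, hkl, hl, hik, ?_⟩
    rw [cds, dif_pos hx]
    rfl
  · exact absurd (by rw [cds, dif_neg hx]) h

theorem stmt10_general (P : List ℤ) (h : cds P ≠ P) :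
    cde (cds P) ≠ cds P := by
  obtain ⟨i, j, k, l, hij, hjk, hkl, hl, hik, hswap⟩ := exists_blockSwap_of_cds_ne_self h
  have hk : k < P.length := hkl.trans hl
  rw [hswap]
  refine cde_ne_self_of_getD_eq (m := i) (by rw [length_blockSwap hij hjk.le hkl.le hl]; omega) ?_
  simp only [List.getD_eq_getElem?_getD, getElem?_blockSwap_self (hij.trans hjk) hk,
    getElem?_blockSwap_succ (hij.trans hjk) hk]
  simpa only [List.getD_eq_getElem?_getD] using hik

/-- after a nontrivial cds on a pointer list of length > 4,
a cde is applicable. -/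
theorem stmt10 (P : List ℤ) (hP : IsPointerList P) (hlen : 4 < P.length)
    (h : cds P ≠ P) :
    cde (cds P) ≠ cds P :=
  stmt10_general P h
end

section
/- A pointer list of length 2 that is a fixed point of cde, cdr, and cds must equal [μ, λ] or [-λ, -μ], where μ is its minimum absolute value and λ its maximum absolute value. -/
theorem IsPointerList.pair_le_and_mul_pos {a b : ℤ} (hP : IsPointerList [a, b]) :
    a ≤ b ∧ 0 < a * b := by
  obtain ⟨-, -, -, -, -, hsign, -⟩ := hP
  simpa using hsign 0 rfl (by simp)

theorem eq_min_abs_of_isLeast_pair {a b mu : ℤ}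
    (h : (∃ i < [a, b].length, |[a, b].getD i 0| = mu) ∧
      ∀ i < [a, b].length, mu ≤ |[a, b].getD i 0|) :
    mu = min |a| |b| := by
  obtain ⟨⟨i, hi, rfl⟩, hle⟩ := h
  have ha : |[a, b].getD i 0| ≤ |a| := hle 0 (by simp)
  have hb : |[a, b].getD i 0| ≤ |b| := hle 1 (by simp)
  simp only [List.length_cons, List.length_nil] at hi
  interval_cases i <;> simp_all

theorem eq_max_abs_of_isGreatest_pair {a b lam : ℤ}
    (h : (∃ i < [a, b].length, |[a, b].getD i 0| = lam) ∧
      ∀ i < [a, b].length, |[a, b].getD i 0| ≤ lam) :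
    lam = max |a| |b| := by
  obtain ⟨⟨i, hi, rfl⟩, hle⟩ := h
  have ha : |a| ≤ |[a, b].getD i 0| := hle 0 (by simp)
  have hb : |b| ≤ |[a, b].getD i 0| := hle 1 (by simp)
  simp only [List.length_cons, List.length_nil] at hi
  interval_cases i <;> simp_all

theorem pair_eq_of_le_of_mul_pos {a b : ℤ} (hle : a ≤ b) (hpos : 0 < a * b) :
    [a, b] = [min |a| |b|, max |a| |b|] ∨ [a, b] = [-max |a| |b|, -min |a| |b|] := by
  rcases pos_and_pos_or_neg_and_neg_of_mul_pos hpos with ⟨ha, hb⟩ | ⟨ha, hb⟩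
  · left
    rw [abs_of_pos ha, abs_of_pos hb, min_eq_left hle, max_eq_right hle]
  · right
    rw [abs_of_neg ha, abs_of_neg hb, min_eq_right (neg_le_neg hle),
      max_eq_left (neg_le_neg hle), neg_neg, neg_neg]

theorem stmt12_general (P : List ℤ) (hP : IsPointerList P) (hlen : P.length = 2)
    (mu lam : ℤ)
    (hmu : (∃ i < P.length, |P.getD i 0| = mu) ∧
      ∀ i < P.length, mu ≤ |P.getD i 0|)
    (hlam : (∃ i < P.length, |P.getD i 0| = lam) ∧
      ∀ i < P.length, |P.getD i 0| ≤ lam) :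
    P = [mu, lam] ∨ P = [-lam, -mu] := by
  obtain ⟨a, b, rfl⟩ := List.length_eq_two.mp hlen
  obtain ⟨hle, hpos⟩ := hP.pair_le_and_mul_pos
  rw [eq_min_abs_of_isLeast_pair hmu, eq_max_abs_of_isGreatest_pair hlam]
  exact pair_eq_of_le_of_mul_pos hle hpos

/-- a length-2 pointer list fixed by cde, cdr and cds equals
[μ, λ] or [-λ, -μ]. -/
theorem stmt12 (P : List ℤ) (hP : IsPointerList P) (hlen : P.length = 2)
    (h1 : cde P = P) (h2 : cdr P = P) (h3 : cds P = P)
    (mu lam : ℤ)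
    (hmu : (∃ i < P.length, |P.getD i 0| = mu) ∧
      ∀ i < P.length, mu ≤ |P.getD i 0|)
    (hlam : (∃ i < P.length, |P.getD i 0| = lam) ∧
      ∀ i < P.length, |P.getD i 0| ≤ lam) :
    P = [mu, lam] ∨ P = [-lam, -mu] :=
  stmt12_general P hP hlen mu lam hmu hlam
end

section
/- A pointer list of length 4 that is a fixed point of cde, cdr, and cds must be of the form [z, λ, μ, z] or [z, -μ, -λ, z] for some integer z with |z| strictly between μ and λ, where μ is the minimum absolute value and λ the maximum absolute value among its entries. -/
/-!
Besides its unique entries of minimal and maximal absolute value, a pointer list of length 4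
has two entries of equal absolute value strictly between μ and λ. Being fixed by cdr forces
them to be equal rather than opposite, and being fixed by cde keeps them apart. Each of the
pairs (x₁, x₂), (x₃, x₄) is strictly increasing with both entries of one sign, so a repeat at
positions 1, 3 or 2, 4 would have extremal absolute value. Hence x₁ = x₄, and the common sign
of the entries places μ and λ.
-/

theorem getD_ne_getD_succ_of_cde_eq_self {P : List ℤ} (h : cde P = P) {i : ℕ}
    (hi : i + 1 < P.length) : P.getD i 0 ≠ P.getD (i + 1) 0 := by
  intro heq
  have hex : ∃ i, i + 1 < P.length ∧ P.getD i 0 = P.getD (i + 1) 0 := ⟨i, hi, heq⟩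
  have hfind := (Nat.find_spec hex).1
  have hlen := congrArg List.length h
  rw [cde, dif_pos hex] at hlen
  simp only [List.length_append, List.length_take, List.length_drop] at hlen
  omega

theorem getD_take_append_map_neg_reverse_append_drop (P : List ℤ) {i j : ℕ} (hij : i < j)
    (hj : j < P.length) :
    (P.take (i + 1) ++ ((P.drop (i + 1)).take (j - i)).reverse.map (fun z => -z) ++
      P.drop (j + 1)).getD (i + 1) 0 = -P.getD j 0 := by
  have hlen : (P.take (i + 1)).length = i + 1 := by simp; omega
  rw [List.append_assoc, List.getD_append_right _ _ _ _ hlen.le,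
    List.getD_append _ _ _ _ (by simp; omega), hlen, Nat.sub_self,
    List.getD_eq_getElem _ _ (by simp; omega), List.getD_eq_getElem _ _ hj]
  simp only [List.getElem_map, List.getElem_reverse, List.getElem_take, List.getElem_drop]
  congr 2
  simp only [List.length_take, List.length_drop]
  omega

open Classical in
theorem getD_ne_neg_getD_of_cdr_eq_self {P : List ℤ} (hcde : cde P = P) (hcdr : cdr P = P)
    {i j : ℕ} (hij : i < j) (hj : j < P.length) : P.getD i 0 ≠ -P.getD j 0 := by
  intro heq
  -- If cdr fixes P, the entry after the first position it selects is the negated partner,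
  -- i.e. equal to its predecessor, which cde forbids.
  have hex : ∃ i j, i < j ∧ j < P.length ∧ P.getD i 0 = -P.getD j 0 := ⟨i, j, hij, hj, heq⟩
  obtain ⟨hij₀, hj₀, heq₀⟩ := Nat.find_spec (Nat.find_spec hex)
  have hsucc : (cdr P).getD (Nat.find hex + 1) 0 = -P.getD (Nat.find (Nat.find_spec hex)) 0 := by
    rw [cdr, dif_pos hex]
    exact getD_take_append_map_neg_reverse_append_drop P hij₀ hj₀
  rw [hcdr] at hsucc
  exact getD_ne_getD_succ_of_cde_eq_self hcde (by omega) (heq₀.trans hsucc.symm)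

theorem getD_eq_getD_of_abs_eq {P : List ℤ} (hcde : cde P = P) (hcdr : cdr P = P)
    {i j : ℕ} (hij : i < j) (hj : j < P.length) (habs : |P.getD i 0| = |P.getD j 0|) :
    P.getD i 0 = P.getD j 0 :=
  (abs_eq_abs.mp habs).resolve_right (getD_ne_neg_getD_of_cdr_eq_self hcde hcdr hij hj)

theorem IsPointerList.exists_abs_eq_of_three_le {P : List ℤ} (hP : IsPointerList P)
    (h3 : 3 ≤ P.length) :
    ∃ i j, i < j ∧ j < P.length ∧ |P.getD i 0| = |P.getD j 0| ∧
      (∃ x ∈ P, |x| < |P.getD i 0|) ∧ (∃ x ∈ P, |P.getD i 0| < |x|) := by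
  obtain ⟨-, -, ⟨m, ⟨hm, hm_min⟩, hm_uniq⟩, ⟨M, ⟨hM, hM_max⟩, hM_uniq⟩, hmid, -, -⟩ := hP
  obtain ⟨i, hi, him, hiM⟩ : ∃ i < 3, i ≠ m ∧ i ≠ M := by
    by_contra! h
    have := h 0; have := h 1; have := h 2
    omega
  replace hi : i < P.length := by omega
  have hmi : |P.getD m 0| < |P.getD i 0| := (hm_min i hi).lt_of_ne fun h =>
    him (hm_uniq i ⟨hi, fun j hj => h ▸ hm_min j hj⟩)
  have hiM : |P.getD i 0| < |P.getD M 0| := (hM_max i hi).lt_of_ne fun h =>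
    hiM (hM_uniq i ⟨hi, fun j hj => h ▸ hM_max j hj⟩)
  have hmem : ∀ k < P.length, P.getD k 0 ∈ P := fun k hk =>
    List.getD_eq_getElem _ _ hk ▸ List.getElem_mem hk
  obtain ⟨j, ⟨hj, hji, habs⟩, -⟩ := hmid i hi ⟨m, hm, hmi⟩ ⟨M, hM, hiM⟩
  rcases lt_or_gt_of_ne hji with h | h
  · exact ⟨j, i, h, hi, habs, ⟨_, hmem m hm, habs ▸ hmi⟩, ⟨_, hmem M hM, habs ▸ hiM⟩⟩
  · exact ⟨i, j, h, hj, habs.symm, ⟨_, hmem m hm, hmi⟩, ⟨_, hmem M hM, hiM⟩⟩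

theorem pos_abs_lt_or_neg_abs_lt_of_lt_of_mul_pos {x y : ℤ} (hxy : x < y) (h : 0 < x * y) :
    (0 < x ∧ |x| < |y|) ∨ (y < 0 ∧ |y| < |x|) := by
  rcases mul_pos_iff.mp h with ⟨hx, hy⟩ | ⟨hx, hy⟩
  · exact .inl ⟨hx, by rwa [abs_of_pos hx, abs_of_pos hy]⟩
  · exact .inr ⟨hy, by rw [abs_of_neg hx, abs_of_neg hy]; omega⟩

theorem eq_last_and_lt_of_getD_eq {a b c d : ℤ} (hab : a < b) (hsab : 0 < a * b) (hcd : c < d)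
    (hscd : 0 < c * d) (hbc : b ≠ c) {i j : ℕ} (hij : i < j) (hj : j < 4)
    (heq : [a, b, c, d].getD i 0 = [a, b, c, d].getD j 0)
    (hlow : ∃ x ∈ [a, b, c, d], |x| < |[a, b, c, d].getD i 0|)
    (hhigh : ∃ x ∈ [a, b, c, d], |[a, b, c, d].getD i 0| < |x|) :
    a = d ∧ c < a ∧ a < b ∧ (0 < c ∨ b < 0) := by
  have hsign_ab := pos_abs_lt_or_neg_abs_lt_of_lt_of_mul_pos hab hsab
  have hsign_cd := pos_abs_lt_or_neg_abs_lt_of_lt_of_mul_pos hcd hscd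
  interval_cases j <;> interval_cases i <;>
    simp only [List.getD_cons_zero, List.getD_cons_succ, List.mem_cons, List.not_mem_nil,
      or_false, exists_eq_or_imp, exists_eq_left] at heq hlow hhigh <;>
    subst heq <;> omega

theorem stmt13_general (P : List ℤ) (hP : IsPointerList P) (hlen : P.length = 4)
    (h1 : cde P = P) (h2 : cdr P = P)
    (mu lam : ℤ)
    (hmu : (∃ i < P.length, |P.getD i 0| = mu) ∧
      ∀ i < P.length, mu ≤ |P.getD i 0|)
    (hlam : (∃ i < P.length, |P.getD i 0| = lam) ∧
      ∀ i < P.length, |P.getD i 0| ≤ lam) :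
    ∃ z : ℤ, mu < |z| ∧ |z| < lam ∧
      (P = [z, lam, mu, z] ∨ P = [z, -mu, -lam, z]) := by
  obtain ⟨a, b, c, d, rfl⟩ := List.length_eq_four.mp hlen
  obtain ⟨i, j, hij, hj, habs, hlow, hhigh⟩ := hP.exists_abs_eq_of_three_le (by simp)
  have hadj := fun k (hk : k + 1 < 4) => getD_ne_getD_succ_of_cde_eq_self h1 (i := k) hk
  obtain ⟨-, -, -, -, -, hpair, -⟩ := hP
  obtain ⟨hab, hsab⟩ : a ≤ b ∧ 0 < a * b := hpair 0 rfl (by simp)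
  obtain ⟨hcd, hscd⟩ : c ≤ d ∧ 0 < c * d := hpair 2 rfl (by simp)
  obtain ⟨rfl, hca, hab, hsign⟩ := eq_last_and_lt_of_getD_eq (hab.lt_of_ne (hadj 0 (by simp)))
    hsab (hcd.lt_of_ne (hadj 2 (by simp))) hscd (hadj 1 (by simp)) hij (by simpa using hj)
    (getD_eq_getD_of_abs_eq h1 h2 hij hj habs) hlow hhigh
  refine ⟨a, ?_⟩
  simp only [List.length_cons, List.length_nil, Nat.reduceAdd, Nat.exists_lt_succ_left,
    Nat.forall_lt_succ_left, List.getD_cons_zero, List.getD_cons_succ, Nat.not_lt_zero,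
    false_and, exists_const, or_false, IsEmpty.forall_iff, implies_true, and_true,
    List.cons.injEq] at hmu hlam ⊢
  rcases hsign with hc | hb
  · simp only [abs_of_pos hc, abs_of_pos (hc.trans hca), abs_of_pos (hc.trans (hca.trans hab)),
      true_and] at hmu hlam ⊢
    omega
  · simp only [abs_of_neg hb, abs_of_neg (hab.trans hb), abs_of_neg (hca.trans (hab.trans hb)),
      true_and] at hmu hlam ⊢
    omega

/-- a length-4 pointer list fixed by cde, cdr and cds equals
[z, λ, μ, z] or [z, -μ, -λ, z] for some z with μ < |z| < λ. -/
theorem stmt13 (P : List ℤ) (hP : IsPointerList P) (hlen : P.length = 4)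
    (h1 : cde P = P) (h2 : cdr P = P) (h3 : cds P = P)
    (mu lam : ℤ)
    (hmu : (∃ i < P.length, |P.getD i 0| = mu) ∧
      ∀ i < P.length, mu ≤ |P.getD i 0|)
    (hlam : (∃ i < P.length, |P.getD i 0| = lam) ∧
      ∀ i < P.length, |P.getD i 0| ≤ lam) :
    ∃ z : ℤ, mu < |z| ∧ |z| < lam ∧
      (P = [z, lam, mu, z] ∨ P = [z, -mu, -lam, z]) :=
  stmt13_general P hP hlen h1 h2 mu lam hmu hlam
end

section
/- If P = [x_1,...,x_m] is a pointer list satisfying: (a) no two adjacent entries are equal, and (b) any two entries of equal absolute value are equal, then there exist indices i < j < k < ℓ with x_i = x_k and x_j = x_ℓ (i.e., a context-directed block swap is applicable). -/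
/-!
Suppose no block swap applies, and choose equal entries `x a = x b`, `a < b`, with `b - a`
minimal. An index strictly between `a` and `b` other than the positions `lo`, `hi` of the
smallest and largest absolute value has a partner of equal value; minimality keeps the partner
outside `[a, b]`, where it would complete a block swap. As adjacent entries differ, `b - a` is
`2` or `3`, and the interior consists of extremal positions.

If `b = a + 2`, the extremal entry is the block-mate of one copy of `x a`. The other copy has the
same parity, so its block-mate lies on the same side of `x a`, hence (signs within a block
agreeing) on the same side in absolute value, and then strictly between the absolute values of
the first block. If `b = a + 3`, the gap condition puts every non-extremal absolute value between
those of the block-mates of the two extremal positions, and here the first is at least the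
second: all non-extremal entries share one absolute value, impossible for more than two of them.
-/

open Finset

def HasCrossingPair {α : Type*} (x : ℕ → α) (n : ℕ) : Prop :=
  ∃ i j k l, i < j ∧ j < k ∧ k < l ∧ l < n ∧ x i = x k ∧ x j = x l

def IsClosestEqPair {α : Type*} (x : ℕ → α) (n a b : ℕ) : Prop :=
  a < b ∧ b < n ∧ x a = x b ∧ ∀ i j, i < j → j < n → x i = x j → b - a ≤ j - i

section EqPairs

variable {α : Type*} {x : ℕ → α} {n : ℕ}

theorem exists_isClosestEqPair (h : ∃ i j, i < j ∧ j < n ∧ x i = x j) :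
    ∃ a b, IsClosestEqPair x n a b := by
  classical
  have hsep : ∃ g, ∃ a, 0 < g ∧ a + g < n ∧ x a = x (a + g) := by
    obtain ⟨i, j, hij, hj, hx⟩ := h
    exact ⟨j - i, i, by omega, by omega, by rwa [Nat.add_sub_cancel' hij.le]⟩
  obtain ⟨a, hpos, hlt, hx⟩ := Nat.find_spec hsep
  refine ⟨a, a + Nat.find hsep, by omega, hlt, hx, fun i j hij hj hxij => ?_⟩
  have := Nat.find_min' hsep (m := j - i)
    ⟨i, by omega, by omega, by rwa [Nat.add_sub_cancel' hij.le]⟩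
  omega

theorem IsClosestEqPair.ne_of_lt_of_lt {a b c d : ℕ} (hab : IsClosestEqPair x n a b)
    (hcross : ¬ HasCrossingPair x n) (hac : a < c) (hcb : c < b) (hd : d < n) (hdc : d ≠ c) :
    x d ≠ x c := by
  obtain ⟨-, hb, hxab, hmin⟩ := hab
  intro hxdc
  have hca : x c ≠ x a := fun h => by have := hmin a c hac (by omega) h.symm; omega
  rcases lt_or_gt_of_ne hdc with hdc | hcd
  · rcases lt_trichotomy d a with hda | rfl | had
    · exact hcross ⟨d, a, c, b, hda, hac, hcb, hb, hxdc, hxab⟩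
    · exact hca hxdc.symm
    · have := hmin d c hdc (by omega) hxdc
      omega
  · rcases lt_trichotomy d b with hdb | rfl | hbd
    · have := hmin c d hcd hd hxdc.symm
      omega
    · exact hca (hxdc.symm.trans hxab.symm)
    · exact hcross ⟨a, c, b, d, hac, hcb, hbd, hd, hxab, hxdc.symm⟩

end EqPairs

theorem exists_forall_ne_lt_of_existsUnique_forall_le {β : Type*} [LinearOrder β] {f : ℕ → β}
    {n : ℕ} (h : ∃! i, i < n ∧ ∀ j < n, f i ≤ f j) :
    ∃ i < n, ∀ j < n, j ≠ i → f i < f j := by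
  obtain ⟨i, ⟨hi, hle⟩, huniq⟩ := h
  refine ⟨i, hi, fun j hj hji => (hle j hj).lt_of_ne fun hij => hji ?_⟩
  exact huniq j ⟨hj, fun k hk => hij ▸ hle k hk⟩

theorem abs_lt_abs_iff_of_mul_pos {R : Type*} [Ring R] [LinearOrder R] [IsStrictOrderedRing R]
    {u y : R} (h : 0 < u * y) (hne : u ≠ y) : |u| < |y| ↔ (u < y ↔ 0 < y) := by
  rcases mul_pos_iff.mp h with ⟨hu, hy⟩ | ⟨hu, hy⟩
  · simp [abs_of_pos hu, abs_of_pos hy, hy]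
  · rw [abs_of_neg hu, abs_of_neg hy, neg_lt_neg_iff, iff_false_intro hy.not_gt, iff_false,
      not_lt, lt_iff_le_and_ne, and_iff_left hne.symm]

theorem abs_ne_abs_of_mul_pos {R : Type*} [Ring R] [LinearOrder R] [IsStrictOrderedRing R]
    {u y : R} (h : 0 < u * y) (hne : u ≠ y) : |u| ≠ |y| := by
  intro habs
  rcases abs_eq_abs.mp habs with huy | huy
  · exact hne huy
  · rw [huy, neg_mul] at h
    exact h.not_ge (neg_nonpos.mpr (mul_self_nonneg y))

def blockMate (i : ℕ) : ℕ := if i % 2 = 0 then i + 1 else i - 1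

@[simp]
theorem blockMate_blockMate (i : ℕ) : blockMate (blockMate i) = i := by
  unfold blockMate
  split_ifs <;> omega

theorem blockMate_ne (i : ℕ) : blockMate i ≠ i := by
  unfold blockMate
  split_ifs <;> omega

theorem blockMate_lt {n i : ℕ} (hn : n % 2 = 0) (hi : i < n) : blockMate i < n := by
  unfold blockMate
  split_ifs <;> omega

def IsBlockOrdered (x : ℕ → ℤ) (n : ℕ) : Prop :=
  ∀ i, i % 2 = 0 → i + 1 < n → x i ≤ x (i+1) ∧ 0 < x i * x (i+1)

def IsBlockGapFree (x : ℕ → ℤ) (n : ℕ) : Prop :=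
  ∀ i, i % 2 = 0 → i + 1 < n → ¬ ∃ j < n,
    (|x i| < |x j| ∧ |x j| < |x (i+1)|) ∨ (|x (i+1)| < |x j| ∧ |x j| < |x i|)

section PointerSeq

variable {x : ℕ → ℤ} {n : ℕ}

theorem blockMate_lt_iff_and_mul_pos (hn : n % 2 = 0)
    (hblk : IsBlockOrdered x n)
    (ha : ∀ i, i + 1 < n → x i ≠ x (i+1)) {i : ℕ} (hi : i < n) :
    (x (blockMate i) < x i ↔ i % 2 = 1) ∧ x (blockMate i) ≠ x i ∧
      0 < x (blockMate i) * x i := by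
  unfold blockMate
  split_ifs with hpar
  · obtain ⟨hle, hpos⟩ := hblk i hpar (by omega)
    have hlt := hle.lt_of_ne (ha i (by omega))
    exact ⟨by simp [hlt.not_gt, hpar], hlt.ne', by rwa [mul_comm]⟩
  · obtain ⟨hle, hpos⟩ := hblk (i - 1) (by omega) (by omega)
    have hne := ha (i - 1) (by omega)
    rw [Nat.sub_add_cancel (by omega)] at hle hpos hne
    exact ⟨by simp only [hle.lt_of_ne hne, true_iff]; omega, hne, hpos⟩

theorem abs_blockMate_lt_abs_iff (hn : n % 2 = 0)
    (hblk : IsBlockOrdered x n)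
    (ha : ∀ i, i + 1 < n → x i ≠ x (i+1)) {i : ℕ} (hi : i < n) :
    |x (blockMate i)| < |x i| ↔ (i % 2 = 1 ↔ 0 < x i) := by
  obtain ⟨hlt, hne, hpos⟩ := blockMate_lt_iff_and_mul_pos hn hblk ha hi
  rw [abs_lt_abs_iff_of_mul_pos hpos hne, hlt]

theorem not_abs_between_blockMate (hn : n % 2 = 0)
    (hgap : IsBlockGapFree x n)
    {i k : ℕ} (hi : i < n) (hk : k < n) :
    ¬ ((|x i| < |x k| ∧ |x k| < |x (blockMate i)|) ∨
      (|x (blockMate i)| < |x k| ∧ |x k| < |x i|)) := by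
  unfold blockMate
  split_ifs with hpar
  · exact fun h => hgap i hpar (by omega) ⟨k, hk, h⟩
  · have h := hgap (i - 1) (by omega) (by omega)
    rw [Nat.sub_add_cancel (by omega)] at h
    exact fun h' => h ⟨k, hk, h'.symm⟩

theorem abs_blockMate_le_of_forall_abs_lt (hn : n % 2 = 0)
    (hgap : IsBlockGapFree x n)
    {lo : ℕ} (hlo : lo < n) (hlo_lt : ∀ j < n, j ≠ lo → |x lo| < |x j|) :
    ∀ j < n, j ≠ lo → |x (blockMate lo)| ≤ |x j| := fun j hj hne =>
  not_lt.mp fun h => not_abs_between_blockMate hn hgap hlo hj (Or.inl ⟨hlo_lt j hj hne, h⟩)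

theorem abs_le_abs_blockMate_of_forall_abs_lt (hn : n % 2 = 0)
    (hgap : IsBlockGapFree x n)
    {hi : ℕ} (hhi : hi < n) (hhi_lt : ∀ j < n, j ≠ hi → |x j| < |x hi|) :
    ∀ j < n, j ≠ hi → |x j| ≤ |x (blockMate hi)| := fun j hj hne =>
  not_lt.mp fun h => not_abs_between_blockMate hn hgap hhi hj (Or.inr ⟨h, hhi_lt j hj hne⟩)

theorem le_four_of_forall_abs_eq {lo hi : ℕ} {c : ℤ}
    (hpartner : ∀ i < n, i ≠ lo → i ≠ hi → ∃! j, j < n ∧ j ≠ i ∧ |x j| = |x i|)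
    (h : ∀ j < n, j ≠ lo → j ≠ hi → |x j| = c) : n ≤ 4 := by
  by_contra hn
  have hcard : 2 < (((range 5).erase lo).erase hi).card := by
    have h1 := pred_card_le_card_erase (s := (range 5).erase lo) (a := hi)
    have h2 := pred_card_le_card_erase (s := range 5) (a := lo)
    rw [card_range] at h2
    omega
  obtain ⟨i, j, k, hi', hj, hk, hij, hik, hjk⟩ := two_lt_card_iff.mp hcard
  simp only [mem_erase, mem_range] at hi' hj hk
  have habs : ∀ l < 5, l ≠ lo → l ≠ hi → |x l| = |x i| := fun l hl h1 h2 =>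
    (h l (by omega) h1 h2).trans (h i (by omega) hi'.2.1 hi'.1).symm
  exact hjk ((hpartner i (by omega) hi'.2.1 hi'.1).unique
    ⟨by omega, hij.symm, habs j hj.2.2 hj.2.1 hj.1⟩
    ⟨by omega, hik.symm, habs k hk.2.2 hk.2.1 hk.1⟩)

theorem ne_add_two_of_extreme_succ (hn : n % 2 = 0)
    (hblk : IsBlockOrdered x n)
    (ha : ∀ i, i + 1 < n → x i ≠ x (i+1))
    (hgap : IsBlockGapFree x n)
    {lo hi a : ℕ} (hlo : ∀ j < n, j ≠ lo → |x lo| < |x j|)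
    (hhi : ∀ j < n, j ≠ hi → |x j| < |x hi|) (ha2 : a + 2 < n)
    (hmid : a + 1 = lo ∨ a + 1 = hi) :
    x a ≠ x (a + 2) := by
  intro hxa
  obtain ⟨p, q, hp, hq, hpq, hpar, hmp, hmq⟩ : ∃ p q, p < n ∧ q < n ∧ x p = x q ∧
      p % 2 = q % 2 ∧ blockMate p = a + 1 ∧ blockMate q ≠ a + 1 := by
    unfold blockMate
    rcases Nat.mod_two_eq_zero_or_one a with h | h
    · exact ⟨a, a + 2, by omega, ha2, hxa, by omega, by simp [h], by split_ifs <;> omega⟩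
    · exact ⟨a + 2, a, ha2, by omega, hxa.symm, by omega, by split_ifs <;> omega,
        by split_ifs <;> omega⟩
  have hside : |x (blockMate p)| < |x p| ↔ |x (blockMate q)| < |x q| := by
    rw [abs_blockMate_lt_abs_iff hn hblk ha hp, abs_blockMate_lt_abs_iff hn hblk ha hq, hpq, hpar]
  have hmq_lt := blockMate_lt hn hq
  have hp_ne : p ≠ a + 1 := hmp ▸ (blockMate_ne p).symm
  rcases hmid with rfl | rfl
  · have hq_gt := hside.mp (hmp ▸ hlo p hp hp_ne)
    have hq_le := abs_blockMate_le_of_forall_abs_lt hn hgap (by omega) hlo _ hmq_lt hmq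
    rw [← hmp, blockMate_blockMate, hpq] at hq_le
    exact hq_le.not_gt hq_gt
  · have hq_ge := hside.not.mp (hmp ▸ hhi p hp hp_ne).not_gt
    have hq_le := abs_le_abs_blockMate_of_forall_abs_lt hn hgap (by omega) hhi _ hmq_lt hmq
    rw [← hmp, blockMate_blockMate, hpq] at hq_le
    obtain ⟨-, hne, hpos⟩ := blockMate_lt_iff_and_mul_pos hn hblk ha hq
    exact hq_ge (hq_le.lt_of_ne (abs_ne_abs_of_mul_pos hpos hne))

theorem ne_add_three_of_extremes (hn : n % 2 = 0)
    (hgap : IsBlockGapFree x n)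
    {lo hi a : ℕ} (hlo : ∀ j < n, j ≠ lo → |x lo| < |x j|)
    (hhi : ∀ j < n, j ≠ hi → |x j| < |x hi|)
    (hpartner : ∀ i < n, i ≠ lo → i ≠ hi → ∃! j, j < n ∧ j ≠ i ∧ |x j| = |x i|)
    (hlen : 4 < n) (ha3 : a + 3 < n)
    (hmid : a + 1 = lo ∧ a + 2 = hi ∨ a + 1 = hi ∧ a + 2 = lo) :
    x a ≠ x (a + 3) := by
  intro hxa
  have hmate₁ : blockMate (a + 1) = if a % 2 = 0 then a else a + 2 := by
    unfold blockMate
    split_ifs <;> omega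
  have hmate₂ : blockMate (a + 2) = if a % 2 = 0 then a + 3 else a + 1 := by
    unfold blockMate
    split_ifs <;> omega
  have hle : |x (blockMate hi)| ≤ |x (blockMate lo)| := by
    rcases hmid with ⟨rfl, rfl⟩ | ⟨rfl, rfl⟩ <;> rw [hmate₁, hmate₂] <;> split_ifs
    · rw [hxa]
    · exact (hlo _ (by omega) (by omega)).le
    · rw [hxa]
    · exact (hhi _ (by omega) (by omega)).le
  have hlo_lt : lo < n := by omega
  have hhi_lt : hi < n := by omega
  have hall : ∀ j < n, j ≠ lo → j ≠ hi → |x j| = |x (blockMate lo)| :=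
    fun j hj hjlo hjhi => le_antisymm
      ((abs_le_abs_blockMate_of_forall_abs_lt hn hgap hhi_lt hhi j hj hjhi).trans hle)
      (abs_blockMate_le_of_forall_abs_lt hn hgap hlo_lt hlo j hj hjlo)
  exact absurd (le_four_of_forall_abs_eq hpartner hall) (by omega)

theorem hasCrossingPair_of_pointerSeq (heven : n % 2 = 0) (hlen : 4 < n)
    (hmin : ∃! i, i < n ∧ ∀ j < n, |x i| ≤ |x j|)
    (hmax : ∃! i, i < n ∧ ∀ j < n, |x j| ≤ |x i|)
    (hpair : ∀ i < n, (∃ j < n, |x j| < |x i|) → (∃ j < n, |x i| < |x j|) →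
        ∃! j, j < n ∧ j ≠ i ∧ |x j| = |x i|)
    (hblk : IsBlockOrdered x n)
    (hgap : IsBlockGapFree x n)
    (ha : ∀ i, i + 1 < n → x i ≠ x (i+1))
    (hb : ∀ i < n, ∀ j < n, |x i| = |x j| → x i = x j) :
    HasCrossingPair x n := by
  obtain ⟨lo, hlo_lt, hlo⟩ := exists_forall_ne_lt_of_existsUnique_forall_le hmin
  obtain ⟨hi, hhi_lt, hhi⟩ :=
    exists_forall_ne_lt_of_existsUnique_forall_le (f := fun i => OrderDual.toDual |x i|) hmax
  have hpartner :
      ∀ c < n, c ≠ lo → c ≠ hi → ∃! d, d < n ∧ d ≠ c ∧ |x d| = |x c| :=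
    fun c hc hclo hchi => hpair c hc ⟨lo, hlo_lt, hlo c hc hclo⟩ ⟨hi, hhi_lt, hhi c hc hchi⟩
  have hpartner_eq : ∀ c < n, c ≠ lo → c ≠ hi → ∃ d < n, d ≠ c ∧ x d = x c := by
    intro c hc hclo hchi
    obtain ⟨d, ⟨hd, hdc, habs⟩, -⟩ := hpartner c hc hclo hchi
    exact ⟨d, hd, hdc, hb d hd c hc habs⟩
  by_contra hcross
  obtain ⟨a, b, hab⟩ : ∃ a b, IsClosestEqPair x n a b := by
    obtain ⟨c, hc, hclo, hchi⟩ : ∃ c < n, c ≠ lo ∧ c ≠ hi :=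
      if h : 0 ≠ lo ∧ 0 ≠ hi then ⟨0, by omega, h⟩
      else if h' : 1 ≠ lo ∧ 1 ≠ hi then ⟨1, by omega, h'⟩
      else ⟨2, by omega, by omega, by omega⟩
    obtain ⟨d, hd, hdc, hxd⟩ := hpartner_eq c hc hclo hchi
    apply exists_isClosestEqPair
    rcases lt_or_gt_of_ne hdc with h | h
    exacts [⟨d, c, h, hc, hxd⟩, ⟨c, d, h, hd, hxd.symm⟩]
  have hinterior : ∀ c, a < c → c < b → c = lo ∨ c = hi := fun c hac hcb => by
    by_contra! hc
    obtain ⟨d, hd, hdc, hxd⟩ := hpartner_eq c (hcb.trans hab.2.1) hc.1 hc.2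
    exact hab.ne_of_lt_of_lt hcross hac hcb hd hdc hxd
  obtain ⟨hab_lt, hbn, hxab, -⟩ := hab
  have h₁ := hinterior (a + 1)
  have h₂ := hinterior (a + 2)
  have h₃ := hinterior (a + 3)
  have hb2 : b ≠ a + 1 := fun h => ha a (by omega) (h ▸ hxab)
  obtain rfl | rfl : b = a + 2 ∨ b = a + 3 := by omega
  · exact ne_add_two_of_extreme_succ heven hblk ha hgap hlo hhi hbn
      (h₁ (by omega) (by omega)) hxab
  · exact ne_add_three_of_extremes heven hgap hlo hhi hpartner hlen hbn (by omega) hxab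

end PointerSeq

/-- for a pointer list of length > 4 with no adjacent equal
entries in which entries of equal absolute value are equal, a context
directed block swap is applicable. -/
theorem stmt15 (P : List ℤ) (hP : IsPointerList P) (hlen : 4 < P.length)
    (ha : ∀ i, i + 1 < P.length → P.getD i 0 ≠ P.getD (i+1) 0)
    (hb : ∀ i < P.length, ∀ j < P.length,
      |P.getD i 0| = |P.getD j 0| → P.getD i 0 = P.getD j 0) :
    ∃ i j k l, i < j ∧ j < k ∧ k < l ∧ l < P.length ∧
      P.getD i 0 = P.getD k 0 ∧ P.getD j 0 = P.getD l 0 := by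
  obtain ⟨heven, -, hmin, hmax, hpair, hblk, hgap⟩ := hP
  exact hasCrossingPair_of_pointerSeq heven hlen hmin hmax hpair hblk hgap ha hb
end
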